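/- arXiv:math/0407394 — 5 statements merged into one kernel-verified Lean document; each statement's English description precedes it below -/
import Mathlib

section
/- Let m ≥ 2 and let L be a thick generalized m-gon. Suppose A and A' are distinct apartments of L whose intersection A ∩ A' is a path with l edges, where 1 ≤ l < m. Then there exists an apartment A'' of L containing the path A ∩ A' such that both intersections A ∩ A'' and A' ∩ A'' are paths with strictly more than l edges. -/
open SimpleGraph

variable {V : Type*}

/-- A generalized `m`-gon: a connected bipartite simple graph of diameter `m`
and girth `2 * m`. -/
def IsGenPolygon (G : SimpleGraph V) (m : ℕ) : Prop :=
  G.Connected ∧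
    (∃ c : V → Bool, ∀ ⦃v w : V⦄, G.Adj v w → c v ≠ c w) ∧
    (∀ u v : V, G.dist u v ≤ m) ∧ (∃ u v : V, G.dist u v = m) ∧
    G.egirth = (2 * m : ℕ∞)

/-- A graph is thick if every vertex has at least three neighbours. -/
def Thick (G : SimpleGraph V) : Prop :=
  ∀ v : V, ∃ a b c : V, G.Adj v a ∧ G.Adj v b ∧ G.Adj v c ∧ a ≠ b ∧ a ≠ c ∧ b ≠ c

/-- An apartment of a generalized `m`-gon: a subgraph which is a cycle of
length `2 * m`. -/
def IsApartment (G : SimpleGraph V) (m : ℕ) (A : G.Subgraph) : Prop :=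
  ∃ (v : V) (w : G.Walk v v), w.IsCycle ∧ w.length = 2 * m ∧ w.toSubgraph = A

/-- A subgraph which is a path with exactly `k` edges. -/
def IsPathSubgraph (G : SimpleGraph V) (k : ℕ) (P : G.Subgraph) : Prop :=
  ∃ (u v : V) (p : G.Walk u v), p.IsPath ∧ p.length = k ∧ p.toSubgraph = P

/-!
Let `γ = A ∩ A'` run from `u` to `v`. Girth `2m` forces every path of length `< m` between two
vertices of an apartment to lie in it, so `γ` is an arc of `A`; extend it inside `A` to a path `P`
of length `m`, ending at a vertex `x` opposite `u`. Let `y` be a neighbour of `u` on `A'` outside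
`A`. By bipartiteness `d(x, y) = m - 1`, and a geodesic from `x` to `y` followed by the edge `yu`
is a path `σ` of length `m` meeting `A` only in `x` and `u`: any other common vertex would give a
short path between vertices of `A` through `y ∉ A`. Then `A'' = P ∪ σ` is an apartment with
`A ∩ A'' = P`, while `A' ∩ A''` is `γ` together with the part of `σ` after it first meets `A'`,
which is short and hence lies in `A'`.
-/

namespace SimpleGraph

variable {G : SimpleGraph V}

namespace Walk

variable {u v w x y a b r : V} {n : ℕ}

lemma take_append_drop (p : G.Walk u v) (n : ℕ) : (p.take n).append (p.drop n) = p := by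
  induction p generalizing n <;> cases n <;> simp [*, take, drop]

lemma exists_eq_append_forall_mem_eq (S : Set V) (p : G.Walk u v) (hv : v ∈ S) :
    ∃ (z : V) (p₁ : G.Walk u z) (p₂ : G.Walk z v),
      p = p₁.append p₂ ∧ z ∈ S ∧ ∀ t ∈ p₁.support, t ∈ S → t = z := by
  induction p with
  | nil => exact ⟨_, nil, nil, rfl, hv, by simp⟩
  | @cons a b _ h p ih =>
    by_cases ha : a ∈ S
    · exact ⟨a, nil, cons h p, rfl, ha, by simp⟩
    · obtain ⟨z, p₁, p₂, rfl, hz, hfirst⟩ := ih hv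
      refine ⟨z, cons h p₁, p₂, rfl, hz, ?_⟩
      intro t ht htS
      rw [support_cons, List.mem_cons] at ht
      rcases ht with rfl | ht
      · exact absurd htS ha
      · exact hfirst t ht htS

lemma IsPath.start_notMem_support_tail {p : G.Walk u v} (hp : p.IsPath) : u ∉ p.support.tail :=
  (List.nodup_cons.mp (p.cons_tail_support ▸ hp.support_nodup)).1

lemma IsPath.append {p : G.Walk u v} {q : G.Walk v w} (hp : p.IsPath) (hq : q.IsPath)
    (h : ∀ t ∈ p.support, t ∈ q.support → t = v) : (p.append q).IsPath := by
  rw [isPath_def, support_append]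
  refine hp.support_nodup.append hq.support_nodup.tail fun t htp htq ↦ ?_
  obtain rfl := h t htp (List.mem_of_mem_tail htq)
  exact hq.start_notMem_support_tail htq

lemma inf_toSubgraph_le_singletonSubgraph {z : V} (H : G.Subgraph) (p : G.Walk u v)
    (h : ∀ t ∈ p.support, t ∈ H.verts → t = z) : H ⊓ p.toSubgraph ≤ G.singletonSubgraph z := by
  constructor
  · rintro t ⟨htH, htp⟩
    exact h t (p.mem_verts_toSubgraph.mp htp) htH
  · rintro s t ⟨hH, hp⟩
    have hs := h s (p.mem_verts_toSubgraph.mp (hp.fst_mem)) hH.fst_mem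
    have ht := h t (p.mem_verts_toSubgraph.mp (hp.snd_mem)) hH.snd_mem
    exact absurd (hs.trans ht.symm) hH.adj_sub.ne

lemma IsCycle.eq_or_eq_of_mem_support_append {p : G.Walk u v} {q : G.Walk v u}
    (hc : (p.append q).IsCycle) (hp : w ∈ p.support) (hq : w ∈ q.support) : w = u ∨ w = v := by
  by_contra! hw
  have hnodup := hc.support_nodup
  rw [tail_support_append, List.nodup_append'] at hnodup
  exact hnodup.2.2 (((p.mem_support_iff).mp hp).resolve_left hw.1)
    (((q.mem_support_iff).mp hq).resolve_left hw.2)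

lemma IsCycle.penultimate_notMem_support {p : G.Walk u v} {q : G.Walk v u}
    (hc : (p.append q).IsCycle) (hq : 2 ≤ q.length) : q.penultimate ∉ p.support := by
  have hq₀ : ¬ q.Nil := by rw [← length_eq_zero_iff]; omega
  have hadj := q.adj_penultimate hq₀
  intro h
  rcases hc.eq_or_eq_of_mem_support_append h (q.getVert_mem_support _) with h | h
  · exact hadj.ne h
  · by_cases hp₀ : p.Nil
    · exact hadj.ne (h.trans hp₀.eq.symm)
    · have := (hc.isPath_of_append_right hp₀).getVert_injOn (by simp) (by simp)
        (h.trans q.getVert_zero.symm)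
      omega

lemma IsCycle.exists_isPath_append {p : G.Walk u v} {q : G.Walk v u} (hc : (p.append q).IsCycle)
    {n : ℕ} (hpn : p.length ≤ n) (hn : n < (p.append q).length) :
    ∃ (x : V) (r : G.Walk v x), (p.append r).IsPath ∧ (p.append r).length = n ∧
      (p.append r).toSubgraph ≤ (p.append q).toSubgraph := by
  rw [length_append] at hn
  rw [← q.take_append_drop (n - p.length), append_assoc] at hc ⊢
  refine ⟨_, q.take (n - p.length), hc.isPath_of_append_left ?_, ?_, ?_⟩
  · rw [nil_drop_iff]; omega
  · rw [length_append, take_length]; omega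
  · rw [toSubgraph_append _ (q.drop _)]
    exact le_sup_left

lemma IsPath.isCycle_append_concat {A : G.Subgraph} {P : G.Walk u x} {ρ : G.Walk x y}
    (hP : P.IsPath) (hyu : G.Adj y u) (hPA : P.toSubgraph ≤ A) (hP₁ : 1 < P.length)
    (hσ : (ρ.concat hyu).IsPath) (hρA : ∀ t ∈ ρ.support, t ∈ A.verts → t = x) :
    (P.append (ρ.concat hyu)).IsCycle := by
  refine hP.isCycle_append hσ (fun t htP htσ ↦ ?_) (Or.inl hP₁)
  have htA : t ∈ A.verts := hPA.1 (P.mem_verts_toSubgraph.mpr (List.mem_of_mem_tail htP))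
  have := List.mem_of_mem_tail htσ
  rw [support_concat, List.mem_append, List.mem_singleton] at this
  rcases this with htρ | rfl
  · exact hσ.start_notMem_support_tail (hρA t htρ htA ▸ htσ)
  · exact hP.start_notMem_support_tail htP

lemma inf_toSubgraph_append_concat {A : G.Subgraph} {P : G.Walk u x} {ρ : G.Walk x y}
    (hyu : G.Adj y u) (hPA : P.toSubgraph ≤ A) (hρA : ∀ t ∈ ρ.support, t ∈ A.verts → t = x)
    (hyA : y ∉ A.verts) : A ⊓ (P.append (ρ.concat hyu)).toSubgraph = P.toSubgraph := by
  refine le_antisymm ?_ (le_inf hPA (toSubgraph_append P _ ▸ le_sup_left))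
  rw [toSubgraph_append, concat_eq_append, toSubgraph_append, inf_sup_left, inf_sup_left,
    inf_eq_right.mpr hPA]
  refine sup_le le_rfl (sup_le ?_ ?_)
  · exact (inf_toSubgraph_le_singletonSubgraph A ρ hρA).trans
      ((singletonSubgraph_le_iff _ _).mpr P.end_mem_verts_toSubgraph)
  · refine (inf_toSubgraph_le_singletonSubgraph A (cons hyu nil) ?_).trans
      ((singletonSubgraph_le_iff _ _).mpr P.start_mem_verts_toSubgraph)
    simp only [support_cons, support_nil, List.mem_cons, List.not_mem_nil, or_false]
    rintro t (rfl | rfl) htA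
    · exact absurd htA hyA
    · rfl

lemma IsPath.le_length_add_length_of_ne (hn : (n : ℕ∞) ≤ G.egirth) {p q : G.Walk u v}
    (hp : p.IsPath) (hq : q.IsPath) (hpq : p ≠ q) : n ≤ p.length + q.length := by
  obtain ⟨_, -, -, c, hc, hcl⟩ := hp.exists_isCycle_length_le_add_of_ne hq hpq
  have : (n : ℕ∞) ≤ c.length := hn.trans (egirth_le_length hc)
  exact (Nat.cast_le.mp this).trans hcl

lemma IsPath.dist_eq_length (hn : (n : ℕ∞) ≤ G.egirth) {p : G.Walk u v} (hp : p.IsPath)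
    (hpn : 2 * p.length ≤ n) : G.dist u v = p.length := by
  obtain ⟨q, hq, hql⟩ := p.reachable.exists_path_of_dist
  have hle : G.dist u v ≤ p.length := dist_le p
  by_contra hne
  have := hp.le_length_add_length_of_ne hn hq (by rintro rfl; omega)
  omega

lemma notMem_support_of_length_lt_dist {p : G.Walk u v} (hp : p.length < G.dist u x) :
    x ∉ p.support := by
  classical
  intro hx
  have := dist_le (p.takeUntil x hx)
  have := p.length_takeUntil_le_length hx
  omega

lemma IsCycle.exists_isCycle_append {c : G.Walk r r} (hc : c.IsCycle)
    (hcg : (c.length : ℕ∞) ≤ G.egirth) {p : G.Walk a b} (hp : p.IsPath) (ha : a ∈ c.support)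
    (hb : b ∈ c.support) (hpc : 2 * p.length < c.length) :
    ∃ q : G.Walk b a, (p.append q).IsCycle ∧ (p.append q).length = c.length ∧
      (p.append q).toSubgraph = c.toSubgraph := by
  classical
  have hb' : b ∈ (c.rotate a ha).support := (c.mem_support_rotate_iff a ha).mpr hb
  obtain ⟨q₁, q₂, hq₁, hsplit⟩ : ∃ (q₁ : G.Walk a b) (q₂ : G.Walk b a), q₁.IsPath ∧
      q₁.append q₂ = c.rotate a ha :=
    ⟨_, _, (hc.rotate ha).isPath_takeUntil hb', take_spec _ hb'⟩
  have hcyc : (q₁.append q₂).IsCycle := hsplit ▸ hc.rotate ha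
  have hlen : q₁.length + q₂.length = c.length := by
    rw [← length_append, hsplit, length_rotate]
  have hsub : (q₁.append q₂).toSubgraph = c.toSubgraph := by rw [hsplit, toSubgraph_rotate]
  by_cases h₁ : p = q₁
  · subst h₁
    exact ⟨q₂, hcyc, by rw [length_append, hlen], hsub⟩
  by_cases h₂ : p = q₂.reverse
  · subst h₂
    refine ⟨q₁.reverse, ?_, ?_, ?_⟩ <;> rw [← reverse_append]
    · exact hcyc.reverse
    · rw [length_reverse, length_append, hlen]
    · rw [toSubgraph_reverse, hsub]
  have hab : a ≠ b := by
    rintro rfl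
    exact h₁ ((isPath_iff_nil.mp hp).eq_nil.trans (isPath_iff_nil.mp hq₁).eq_nil.symm)
  have hq₂ : q₂.IsPath := hcyc.isPath_of_append_right (not_nil_of_ne hab)
  have := hp.le_length_add_length_of_ne hcg hq₁ h₁
  have := hp.le_length_add_length_of_ne hcg hq₂.reverse h₂
  simp only [length_reverse] at this
  omega

end Walk

lemma dist_eq_sub_one_of_adj {m : ℕ} {u x y : V} (hconn : G.Connected) (c : G.Coloring Bool)
    (hdiam : ∀ a b, G.dist a b ≤ m) (hux : G.dist u x = m) (hyu : G.Adj y u) :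
    G.dist x y = m - 1 := by
  have htri : G.dist x u ≤ G.dist x y + G.dist y u := hconn.dist_triangle
  rw [dist_comm, hux, dist_eq_one_iff_adj.mpr hyu] at htri
  have hne : G.dist x y ≠ m := by
    intro h
    obtain ⟨p, hp⟩ := hconn.exists_walk_length_eq_dist x y
    obtain ⟨q, hq⟩ := hconn.exists_walk_length_eq_dist x u
    have hp' := c.even_length_iff_congr p
    have hq' := c.even_length_iff_congr q
    rw [hp, h] at hp'
    rw [hq, dist_comm, hux] at hq'
    have := c.valid hyu
    revert hp' hq' this
    cases c x <;> cases c y <;> cases c u <;> simp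
  have := hdiam x y
  omega

end SimpleGraph

namespace IsApartment

open SimpleGraph.Walk

variable {G : SimpleGraph V} {m : ℕ} {A A' : G.Subgraph} {u v : V}

lemma exists_isCycle_append (hg : (2 * m : ℕ∞) ≤ G.egirth) (hA : IsApartment G m A)
    {a b : V} {p : G.Walk a b} (hp : p.IsPath) (ha : a ∈ A.verts) (hb : b ∈ A.verts)
    (hpm : p.length < m) :
    ∃ q : G.Walk b a, (p.append q).IsCycle ∧ (p.append q).length = 2 * m ∧
      (p.append q).toSubgraph = A := by
  obtain ⟨r, c, hc, hcl, rfl⟩ := hA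
  rw [← hcl]
  exact hc.exists_isCycle_append (by rw [hcl]; exact_mod_cast hg) hp
    (c.mem_verts_toSubgraph.mp ha) (c.mem_verts_toSubgraph.mp hb) (by omega)

lemma toSubgraph_le_of_isPath (hg : (2 * m : ℕ∞) ≤ G.egirth) (hA : IsApartment G m A)
    {a b : V} {p : G.Walk a b} (hp : p.IsPath) (ha : a ∈ A.verts) (hb : b ∈ A.verts)
    (hpm : p.length < m) : p.toSubgraph ≤ A := by
  obtain ⟨q, -, -, hq⟩ := hA.exists_isCycle_append hg hp ha hb hpm
  exact hq ▸ p.toSubgraph_append q ▸ le_sup_left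

lemma exists_isPath_append_dist_eq (hg : (2 * m : ℕ∞) ≤ G.egirth) (hA : IsApartment G m A)
    {γ : G.Walk u v} (hγ : γ.IsPath) (hγA : γ.toSubgraph ≤ A) (hγm : γ.length < m) :
    ∃ (x : V) (r : G.Walk v x), (γ.append r).IsPath ∧ (γ.append r).length = m ∧
      (γ.append r).toSubgraph ≤ A ∧ G.dist u x = m := by
  obtain ⟨α, hα, hαl, hαA⟩ := hA.exists_isCycle_append hg hγ
    (hγA.1 γ.start_mem_verts_toSubgraph) (hγA.1 γ.end_mem_verts_toSubgraph) hγm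
  obtain ⟨x, r, hP, hPl, hPA⟩ := hα.exists_isPath_append hγm.le (by omega)
  refine ⟨x, r, hP, hPl, hαA ▸ hPA, hPl ▸ hP.dist_eq_length (n := 2 * m) ?_ (by omega)⟩
  exact_mod_cast hg

lemma exists_adj_mem_notMem (hg : (2 * m : ℕ∞) ≤ G.egirth) (hA' : IsApartment G m A')
    {γ : G.Walk u v} (hγ : γ.IsPath) (hγm : γ.length < m) (hAA' : γ.toSubgraph = A ⊓ A') :
    ∃ y, G.Adj y u ∧ y ∈ A'.verts ∧ y ∉ A.verts := by
  have hγA' : γ.toSubgraph ≤ A' := hAA' ▸ inf_le_right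
  obtain ⟨β, hβ, hβl, hβA'⟩ := hA'.exists_isCycle_append hg hγ
    (hγA'.1 γ.start_mem_verts_toSubgraph) (hγA'.1 γ.end_mem_verts_toSubgraph) hγm
  rw [length_append] at hβl
  have hyβ : β.penultimate ∈ (γ.append β).support :=
    (mem_support_append_iff _ _).mpr (Or.inr (β.getVert_mem_support _))
  have hyA' : β.penultimate ∈ A'.verts := hβA' ▸ (γ.append β).mem_verts_toSubgraph.mpr hyβ
  refine ⟨β.penultimate, β.adj_penultimate (by rw [← length_eq_zero_iff]; omega), hyA', ?_⟩
  intro hyA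
  refine hβ.penultimate_notMem_support (by omega) (γ.mem_verts_toSubgraph.mp ?_)
  exact hAA' ▸ ⟨hyA, hyA'⟩

lemma exists_path_through_adj_of_dist_eq (hg : (2 * m : ℕ∞) ≤ G.egirth) (hA : IsApartment G m A)
    (hconn : G.Connected) (c : G.Coloring Bool) (hdiam : ∀ a b, G.dist a b ≤ m) {u x y : V}
    (hu : u ∈ A.verts) (hx : x ∈ A.verts) (hux : G.dist u x = m) (hyA : y ∉ A.verts)
    (hyu : G.Adj y u) :
    ∃ ρ : G.Walk x y, (ρ.concat hyu).IsPath ∧ ρ.length + 1 = m ∧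
      ∀ t ∈ ρ.support, t ∈ A.verts → t = x := by
  classical
  obtain ⟨ρ, hρ, hρl⟩ := hconn.exists_path_of_dist x y
  rw [dist_eq_sub_one_of_adj hconn c hdiam hux hyu] at hρl
  have hρ₀ : ρ.length ≠ 0 := fun h ↦ hyA (eq_of_length_eq_zero h ▸ hx)
  have huρ : u ∉ ρ.support := ρ.notMem_support_of_length_lt_dist (by rw [dist_comm]; omega)
  refine ⟨ρ, hρ.concat huρ hyu, by omega, fun t ht htA ↦ ?_⟩
  by_contra htx
  let τ := (ρ.dropUntil t ht).concat hyu
  have hτ : τ.IsPath :=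
    (hρ.dropUntil ht).concat (fun h ↦ huρ (ρ.support_dropUntil_subset_support ht h)) hyu
  have hτl : τ.length < m := by
    have := ρ.length_dropUntil_lt_length ht htx
    simp only [τ, length_concat]
    omega
  have hyτ : y ∈ τ.support := by simp [τ, support_concat]
  exact hyA ((hA.toSubgraph_le_of_isPath hg hτ htA hu hτl).1
    (τ.mem_verts_toSubgraph.mpr hyτ))

lemma exists_isPathSubgraph_inf_append_concat (hg : (2 * m : ℕ∞) ≤ G.egirth)
    (hA' : IsApartment G m A') {x y : V} {γ : G.Walk u v} {P : G.Walk u x} {ρ : G.Walk x y}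
    (hyu : G.Adj y u) (hγ : γ.IsPath) (hAA' : γ.toSubgraph = A ⊓ A')
    (hγP : γ.toSubgraph ≤ P.toSubgraph) (hPA : P.toSubgraph ≤ A) (hσ : (ρ.concat hyu).IsPath)
    (hρl : ρ.length + 1 = m) (hρA : ∀ t ∈ ρ.support, t ∈ A.verts → t = x)
    (hyA' : y ∈ A'.verts) (hxA' : x ∉ A'.verts) :
    ∃ k, γ.length < k ∧ IsPathSubgraph G k (A' ⊓ (P.append (ρ.concat hyu)).toSubgraph) := by
  have hγA : γ.toSubgraph ≤ A := hAA' ▸ inf_le_left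
  have hγA' : γ.toSubgraph ≤ A' := hAA' ▸ inf_le_right
  obtain ⟨w, ρ₁, ρ₂, rfl, hwA', hfirst⟩ := ρ.exists_eq_append_forall_mem_eq A'.verts hyA'
  rw [← append_concat] at hσ ⊢
  have hσ₂ := hσ.of_append_right
  have hwx : w ≠ x := fun h ↦ hxA' (h ▸ hwA')
  have hρ₁ : ρ₁.length ≠ 0 := fun h ↦ hwx (eq_of_length_eq_zero h).symm
  rw [length_append] at hρl
  have hσ₂A' : (ρ₂.concat hyu).toSubgraph ≤ A' :=
    hA'.toSubgraph_le_of_isPath hg hσ₂ hwA' (hγA'.1 γ.start_mem_verts_toSubgraph)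
      (by rw [length_concat]; omega)
  have hR : ((ρ₂.concat hyu).append γ).IsPath := by
    refine hσ₂.append hγ fun t htσ htγ ↦ ?_
    rw [support_concat, List.mem_append, List.mem_singleton] at htσ
    rcases htσ with htρ | rfl
    · obtain rfl := hρA t ((mem_support_append_iff _ _).mpr (Or.inr htρ))
        (hγA.1 (γ.mem_verts_toSubgraph.mpr htγ))
      exact absurd (hγA'.1 (γ.mem_verts_toSubgraph.mpr htγ)) hxA'
    · rfl
  refine ⟨_, by simp only [length_append, length_concat]; omega, _, _, _, hR, rfl, ?_⟩
  have hA'P : A' ⊓ P.toSubgraph = γ.toSubgraph :=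
    le_antisymm (hAA' ▸ inf_comm A A' ▸ inf_le_inf_left A' hPA) (le_inf hγA' hγP)
  have hA'ρ₁ : A' ⊓ ρ₁.toSubgraph ≤ (ρ₂.concat hyu).toSubgraph :=
    (inf_toSubgraph_le_singletonSubgraph A' ρ₁ hfirst).trans
      ((singletonSubgraph_le_iff _ _).mpr (start_mem_verts_toSubgraph _))
  rw [toSubgraph_append, toSubgraph_append P, toSubgraph_append ρ₁, inf_sup_left, inf_sup_left,
    inf_eq_right.mpr hσ₂A', hA'P, sup_eq_right.mpr hA'ρ₁, sup_comm]

end IsApartment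

theorem exists_apartment_with_larger_intersections_general
    (G : SimpleGraph V) (m : ℕ) (hm : 2 ≤ m)
    (hG : IsGenPolygon G m)
    (A A' : G.Subgraph) (hA : IsApartment G m A) (hA' : IsApartment G m A')
    (l : ℕ) (hlm : l < m)
    (hint : IsPathSubgraph G l (A ⊓ A')) :
    ∃ A'' : G.Subgraph, IsApartment G m A'' ∧ A ⊓ A' ≤ A'' ∧
      (∃ l₁ : ℕ, l < l₁ ∧ IsPathSubgraph G l₁ (A ⊓ A'')) ∧
      (∃ l₂ : ℕ, l < l₂ ∧ IsPathSubgraph G l₂ (A' ⊓ A'')) := by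
  obtain ⟨hconn, ⟨c, hc⟩, hdiam, -, hgirth⟩ := hG
  have hg : (2 * m : ℕ∞) ≤ G.egirth := hgirth.ge
  obtain ⟨u, v, γ, hγ, rfl, hAA'⟩ := hint
  obtain ⟨x, r, hP, hPl, hPA, hux⟩ :=
    hA.exists_isPath_append_dist_eq hg hγ (hAA' ▸ inf_le_left) hlm
  have hxA' : x ∉ A'.verts := fun hxA' ↦ γ.notMem_support_of_length_lt_dist (hux ▸ hlm)
    (γ.mem_verts_toSubgraph.mp (hAA' ▸ ⟨hPA.1 (γ.append r).end_mem_verts_toSubgraph, hxA'⟩))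
  obtain ⟨y, hyu, hyA', hyA⟩ := hA'.exists_adj_mem_notMem hg hγ hlm hAA'
  obtain ⟨ρ, hσ, hρl, hρA⟩ := hA.exists_path_through_adj_of_dist_eq hg hconn
    (.mk c fun h ↦ hc h) hdiam (hPA.1 (γ.append r).start_mem_verts_toSubgraph)
    (hPA.1 (γ.append r).end_mem_verts_toSubgraph) hux hyA hyu
  have hγP : γ.toSubgraph ≤ (γ.append r).toSubgraph := γ.toSubgraph_append r ▸ le_sup_left
  refine ⟨_, ⟨u, _, hP.isCycle_append_concat hyu hPA (by omega) hσ hρA, ?_, rfl⟩,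
    hAA' ▸ hγP.trans ((γ.append r).toSubgraph_append (ρ.concat hyu) ▸ le_sup_left),
    ⟨m, hlm, _, _, _, hP, hPl, (Walk.inf_toSubgraph_append_concat hyu hPA hρA hyA).symm⟩,
    hA'.exists_isPathSubgraph_inf_append_concat hg hyu hγ hAA' hγP hPA hσ hρl hρA hyA' hxA'⟩
  rw [Walk.length_append, Walk.length_concat, hPl]
  omega

/-- If two distinct apartments of a thick generalized `m`-gon intersect in a path
with `l` edges, `1 ≤ l < m`, then there is an apartment containing this path whose
intersections with both given apartments are paths with strictly more than `l`
edges. -/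
theorem exists_apartment_with_larger_intersections
    (G : SimpleGraph V) (m : ℕ) (hm : 2 ≤ m)
    (hG : IsGenPolygon G m) (hthick : Thick G)
    (A A' : G.Subgraph) (hA : IsApartment G m A) (hA' : IsApartment G m A')
    (hne : A ≠ A') (l : ℕ) (hl1 : 1 ≤ l) (hlm : l < m)
    (hint : IsPathSubgraph G l (A ⊓ A')) :
    ∃ A'' : G.Subgraph, IsApartment G m A'' ∧ A ⊓ A' ≤ A'' ∧
      (∃ l₁ : ℕ, l < l₁ ∧ IsPathSubgraph G l₁ (A ⊓ A'')) ∧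
      (∃ l₂ : ℕ, l < l₂ ∧ IsPathSubgraph G l₂ (A' ⊓ A'')) :=
  exists_apartment_with_larger_intersections_general G m hm hG A A' hA hA' l hlm hint
end

section
/- Let m ≥ 2 and let L be a generalized m-gon. If A₁ and A₂ are apartments of L that share at least one edge, then either A₁ = A₂ or the intersection A₁ ∩ A₂ is a path in L with at most m edges. -/
/-!
Orient both apartments as closed walks that start along the shared edge. If they differ, strip
their longest common prefix `p` and suffix `s`: the cycles become `p ++ dᵢ ++ s`, where the middle
paths `d₁, d₂` leave and enter through different edges. Two distinct paths with common ends span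
a cycle of length at most the sum of their lengths, so girth `2m` forces `|d₁| = |d₂| ≥ m`, and,
as `p` is nonempty, it forbids `d₁` and `d₂` to meet in an inner vertex (splitting both there
would give a cycle shorter than `2m` on one side) or in an edge. So the intersection is exactly
the path `s ++ p`, of length at most `m`.
-/

open SimpleGraph

variable {V : Type*}

namespace SimpleGraph.Walk

variable {G : SimpleGraph V} {u v w x y c c' : V}

theorem snd_append_of_not_nil {p : G.Walk x y} (q : G.Walk y w) (hp : ¬ p.Nil) :
    (p.append q).snd = p.snd := by
  cases p with
  | nil => exact absurd nil_nil hp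
  | cons h p => rw [cons_append, snd_cons, snd_cons]

theorem penultimate_append_of_not_nil (p : G.Walk x y) {q : G.Walk y w} (hq : ¬ q.Nil) :
    (p.append q).penultimate = q.penultimate := by
  rw [← snd_reverse, reverse_append, snd_append_of_not_nil _ (nil_reverse.not.mpr hq), snd_reverse]

theorem not_nil_of_snd_ne {d₁ d₂ : G.Walk x y} (hlen : d₁.length = d₂.length)
    (hsnd : d₁.snd ≠ d₂.snd) : ¬ d₁.Nil := by
  intro hnil
  rw [← length_eq_zero_iff] at hnil
  exact hsnd ((d₁.getVert_of_length_le (by omega)).trans (d₂.getVert_of_length_le (by omega)).symm)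

theorem IsCycle.append_comm {p : G.Walk x y} {q : G.Walk y x} (h : (p.append q).IsCycle) :
    (q.append p).IsCycle := by
  rw [isCycle_def, isTrail_def, edges_append, tail_support_append] at h ⊢
  refine ⟨List.nodup_append_comm.mp h.1, fun hnil => h.2.1 ?_, List.nodup_append_comm.mp h.2.2⟩
  rw [eq_nil_iff_nil, ← length_eq_zero_iff, length_append] at hnil ⊢
  omega

theorem IsCycle.exists_isCycle_cons_toSubgraph_eq [DecidableEq V] {p : G.Walk w w}
    (hp : p.IsCycle) (huv : p.toSubgraph.Adj u v) :
    ∃ (h : G.Adj u v) (t : G.Walk v u), (cons h t).IsCycle ∧ (cons h t).length = p.length ∧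
      (cons h t).toSubgraph = p.toSubgraph := by
  have hu : u ∈ p.support := p.mem_verts_toSubgraph.mp huv.fst_mem
  obtain ⟨q, hq, rfl, hlen, hsub⟩ : ∃ q : G.Walk u u, q.IsCycle ∧ q.snd = v ∧
      q.length = p.length ∧ q.toSubgraph = p.toSubgraph := by
    have hv : v ∈ (p.rotate u hu).toSubgraph.neighborSet u := by
      rwa [toSubgraph_rotate]
    rw [(hp.rotate hu).neighborSet_toSubgraph_endpoint] at hv
    rcases hv with hv | hv
    · exact ⟨_, hp.rotate hu, hv.symm, length_rotate .., toSubgraph_rotate ..⟩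
    · exact ⟨_, (hp.rotate hu).reverse, by rw [snd_reverse, hv], by simp, by simp⟩
  exact ⟨q.adj_snd hq.not_nil, q.tail, by rwa [cons_tail_eq _ hq.not_nil],
    by rw [cons_tail_eq _ hq.not_nil, hlen], by rw [cons_tail_eq _ hq.not_nil, hsub]⟩

theorem exists_eq_append_of_ne {w₁ w₂ : G.Walk x y} (hlen : w₁.length = w₂.length)
    (hne : w₁ ≠ w₂) :
    ∃ (c : V) (p : G.Walk x c) (d₁ d₂ : G.Walk c y),
      w₁ = p.append d₁ ∧ w₂ = p.append d₂ ∧ d₁.snd ≠ d₂.snd := by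
  induction w₁ with
  | nil =>
    exact absurd (eq_nil_iff_nil.mpr (length_eq_zero_iff.mp hlen.symm)).symm hne
  | @cons x b _ h t ih =>
    cases w₂ with
    | nil => simp at hlen
    | @cons _ b' _ h' t' =>
      by_cases hb : b = b'
      · subst hb
        obtain ⟨c, p, d₁, d₂, rfl, rfl, hd⟩ :=
          ih (by simpa using hlen) (fun ht => hne (by rw [ht]))
        exact ⟨c, cons h p, d₁, d₂, rfl, rfl, hd⟩
      · exact ⟨x, nil, cons h t, cons h' t', rfl, rfl, by simpa⟩

theorem exists_eq_append_append_of_ne {w₁ w₂ : G.Walk x y} (hlen : w₁.length = w₂.length)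
    (hne : w₁ ≠ w₂) :
    ∃ (c c' : V) (p : G.Walk x c) (d₁ d₂ : G.Walk c c') (s : G.Walk c' y),
      w₁ = p.append (d₁.append s) ∧ w₂ = p.append (d₂.append s) ∧
      d₁.snd ≠ d₂.snd ∧ d₁.penultimate ≠ d₂.penultimate := by
  obtain ⟨c, p, e₁, e₂, rfl, rfl, he⟩ := exists_eq_append_of_ne hlen hne
  have helen : e₁.reverse.length = e₂.reverse.length := by simpa using hlen
  obtain ⟨c', s, f₁, f₂, hf₁, hf₂, hf⟩ :=
    exists_eq_append_of_ne helen (fun h => he (by rw [reverse_injective h]))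
  have hflen : f₁.length = f₂.length := by simpa [hf₁, hf₂] using helen
  have he₁ : e₁ = f₁.reverse.append s.reverse := by rw [← reverse_reverse e₁, hf₁, reverse_append]
  have he₂ : e₂ = f₂.reverse.append s.reverse := by rw [← reverse_reverse e₂, hf₂, reverse_append]
  refine ⟨c, c', p, f₁.reverse, f₂.reverse, s.reverse, by rw [he₁], by rw [he₂], ?_,
    by simpa only [penultimate_reverse] using hf⟩
  rwa [he₁, he₂, snd_append_of_not_nil _ (nil_reverse.not.mpr (not_nil_of_snd_ne hflen hf)),
    snd_append_of_not_nil _ (nil_reverse.not.mpr (not_nil_of_snd_ne hflen.symm hf.symm))] at he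

theorem IsPath.egirth_le_length_add {p q : G.Walk x y} (hp : p.IsPath) (hq : q.IsPath)
    (hne : p ≠ q) : G.egirth ≤ p.length + q.length := by
  obtain ⟨_, -, -, c, hc, hlen⟩ := hp.exists_isCycle_length_le_add_of_ne hq hne
  exact (egirth_le_length hc).trans (by exact_mod_cast hlen)

theorem IsPath.eq_or_eq_of_mem_support [DecidableEq V] {d₁ d₂ : G.Walk x y} (h₁ : d₁.IsPath)
    (h₂ : d₂.IsPath) (hsnd : d₁.snd ≠ d₂.snd) (hpen : d₁.penultimate ≠ d₂.penultimate)
    (hlen : (d₁.length + d₂.length : ℕ∞) < 2 * G.egirth) (hw₁ : w ∈ d₁.support)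
    (hw₂ : w ∈ d₂.support) : w = x ∨ w = y := by
  by_contra! hw
  have htake : d₁.takeUntil w hw₁ ≠ d₂.takeUntil w hw₂ := fun h =>
    hsnd (by rw [← snd_takeUntil hw.1 d₁ hw₁, h, snd_takeUntil hw.1])
  have hdrop : d₁.dropUntil w hw₁ ≠ d₂.dropUntil w hw₂ := fun h => hpen (by
    rw [← d₁.take_spec hw₁, ← d₂.take_spec hw₂,
      penultimate_append_of_not_nil _ (not_nil_of_ne hw.2),
      penultimate_append_of_not_nil _ (not_nil_of_ne hw.2), h])
  have hgirth_take := (h₁.takeUntil hw₁).egirth_le_length_add (h₂.takeUntil hw₂) htake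
  have hgirth_drop := (h₁.dropUntil hw₁).egirth_le_length_add (h₂.dropUntil hw₂) hdrop
  have hsplit₁ := congrArg length (d₁.take_spec hw₁)
  have hsplit₂ := congrArg length (d₂.take_spec hw₂)
  rw [length_append] at hsplit₁ hsplit₂
  refine hlen.not_ge ?_
  calc 2 * G.egirth = G.egirth + G.egirth := two_mul _
    _ ≤ _ := add_le_add hgirth_take hgirth_drop
    _ = (d₁.length + d₂.length : ℕ∞) := by rw [← hsplit₁, ← hsplit₂]; push_cast; ring

theorem IsPath.toSubgraph_inf_le [DecidableEq V] {d₁ d₂ : G.Walk x y} (h₁ : d₁.IsPath)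
    (h₂ : d₂.IsPath) (hsnd : d₁.snd ≠ d₂.snd) (hpen : d₁.penultimate ≠ d₂.penultimate)
    (hlen : (d₁.length + d₂.length : ℕ∞) < 2 * G.egirth) {H : G.Subgraph} (hx : x ∈ H.verts)
    (hy : y ∈ H.verts) : d₁.toSubgraph ⊓ d₂.toSubgraph ≤ H := by
  have hends : ∀ {w}, w ∈ d₁.support → w ∈ d₂.support → w = x ∨ w = y :=
    h₁.eq_or_eq_of_mem_support h₂ hsnd hpen hlen
  refine ⟨fun w ⟨hw₁, hw₂⟩ => ?_, fun a b ⟨hab₁, hab₂⟩ => ?_⟩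
  · rcases hends (d₁.mem_verts_toSubgraph.mp hw₁) (d₂.mem_verts_toSubgraph.mp hw₂) with rfl | rfl
    exacts [hx, hy]
  · exfalso
    rw [adj_toSubgraph_iff_mem_edges] at hab₁ hab₂
    suffices hxy : s(x, y) ∈ d₁.edges ∧ s(x, y) ∈ d₂.edges from
      hsnd (congrArg snd ((h₁.eq_adj_toWalk_of_mem_edges hxy.1).trans
        (h₂.eq_adj_toWalk_of_mem_edges hxy.2).symm))
    have hab : a ≠ b := (d₁.adj_of_mem_edges hab₁).ne
    rcases hends (d₁.fst_mem_support_of_mem_edges hab₁) (d₂.fst_mem_support_of_mem_edges hab₂)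
      with rfl | rfl <;>
    rcases hends (d₁.snd_mem_support_of_mem_edges hab₁) (d₂.snd_mem_support_of_mem_edges hab₂)
      with rfl | rfl
    · exact absurd rfl hab
    · exact ⟨hab₁, hab₂⟩
    · rw [Sym2.eq_swap] at hab₁ hab₂
      exact ⟨hab₁, hab₂⟩
    · exact absurd rfl hab

theorem IsCycle.toSubgraph_inf_eq_of_append_append [DecidableEq V] {n : ℕ}
    (hn : (n : ℕ∞) ≤ G.egirth) {p : G.Walk u c} {d₁ d₂ : G.Walk c c'} {s : G.Walk c' u}
    (hc₁ : (p.append (d₁.append s)).IsCycle) (hc₂ : (p.append (d₂.append s)).IsCycle)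
    (hl₁ : (p.append (d₁.append s)).length = n) (hl₂ : (p.append (d₂.append s)).length = n)
    (hp : ¬ p.Nil) (hsnd : d₁.snd ≠ d₂.snd) (hpen : d₁.penultimate ≠ d₂.penultimate) :
    (s.append p).IsPath ∧ 2 * (s.append p).length ≤ n ∧
      (s.append p).toSubgraph =
        (p.append (d₁.append s)).toSubgraph ⊓ (p.append (d₂.append s)).toSubgraph := by
  have hrot : ∀ {d : G.Walk c c'}, (p.append (d.append s)).IsCycle →
      (d.append (s.append p)).IsCycle := fun h => by
    simpa only [append_assoc] using h.append_comm
  have hsp : ¬ (s.append p).Nil := fun h => hp (nil_append_iff.mp h).2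
  have hd₁ : d₁.IsPath := (hrot hc₁).isPath_of_append_left hsp
  have hd₂ : d₂.IsPath := (hrot hc₂).isPath_of_append_left hsp
  simp only [length_append] at hl₁ hl₂
  have hdlen : d₁.length = d₂.length := by omega
  have hpath : (s.append p).IsPath :=
    (hrot hc₁).isPath_of_append_right (not_nil_of_snd_ne hdlen hsnd)
  have hplen : 0 < p.length := not_nil_iff_lt_length.mp hp
  have hgirth : n ≤ d₁.length + d₂.length := by
    exact_mod_cast hn.trans (hd₁.egirth_le_length_add hd₂ (fun h => hsnd (h ▸ rfl)))
  have hshort : (d₁.length + d₂.length : ℕ∞) < 2 * G.egirth := by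
    calc (d₁.length + d₂.length : ℕ∞) = ((d₁.length + d₂.length : ℕ) : ℕ∞) := by push_cast; rfl
      _ < ((2 * n : ℕ) : ℕ∞) := by exact_mod_cast (by omega)
      _ ≤ 2 * G.egirth := by push_cast; gcongr
  have hsplit : ∀ d : G.Walk c c', (p.append (d.append s)).toSubgraph =
      (s.append p).toSubgraph ⊔ d.toSubgraph := by
    intro d
    simp only [toSubgraph_append]
    ac_rfl
  refine ⟨hpath, by rw [length_append]; omega, ?_⟩
  rw [hsplit, hsplit, ← sup_inf_left, sup_of_le_left]
  exact hd₁.toSubgraph_inf_le hd₂ hsnd hpen hshort (s.append p).end_mem_verts_toSubgraph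
    (s.append p).start_mem_verts_toSubgraph

end SimpleGraph.Walk

theorem apartments_sharing_edge_general
    (G : SimpleGraph V) (m : ℕ) (hG : IsGenPolygon G m)
    (A₁ A₂ : G.Subgraph) (h₁ : IsApartment G m A₁) (h₂ : IsApartment G m A₂)
    (hshare : ∃ u v : V, A₁.Adj u v ∧ A₂.Adj u v) :
    A₁ = A₂ ∨ ∃ l : ℕ, l ≤ m ∧ IsPathSubgraph G l (A₁ ⊓ A₂) := by
  classical
  obtain ⟨u, v, hA₁, hA₂⟩ := hshare
  obtain ⟨_, w₁, hw₁, hl₁, rfl⟩ := h₁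
  obtain ⟨_, w₂, hw₂, hl₂, rfl⟩ := h₂
  obtain ⟨h, T₁, hT₁, hlen₁, hsub₁⟩ := hw₁.exists_isCycle_cons_toSubgraph_eq hA₁
  obtain ⟨_, T₂, hT₂, hlen₂, hsub₂⟩ := hw₂.exists_isCycle_cons_toSubgraph_eq hA₂
  rw [← hsub₁, ← hsub₂]
  by_cases heq : T₁ = T₂
  · exact Or.inl (by rw [heq])
  obtain ⟨c, c', p, d₁, d₂, s, rfl, rfl, hsnd, hpen⟩ :=
    Walk.exists_eq_append_append_of_ne (by simp only [Walk.length_cons] at hlen₁ hlen₂; omega) heq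
  obtain ⟨hpath, hlen, hinf⟩ :=
    Walk.IsCycle.toSubgraph_inf_eq_of_append_append (n := 2 * m) (p := Walk.cons h p)
      hG.2.2.2.2.ge hT₁ hT₂ (hlen₁.trans hl₁) (hlen₂.trans hl₂) Walk.not_nil_cons hsnd hpen
  exact Or.inr ⟨_, by omega, _, _, _, hpath, rfl, hinf⟩

/-- Two apartments of a generalized `m`-gon sharing an edge are either equal or
intersect in a path with at most `m` edges. -/
theorem apartments_sharing_edge
    (G : SimpleGraph V) (m : ℕ) (hm : 2 ≤ m) (hG : IsGenPolygon G m)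
    (A₁ A₂ : G.Subgraph) (h₁ : IsApartment G m A₁) (h₂ : IsApartment G m A₂)
    (hshare : ∃ u v : V, A₁.Adj u v ∧ A₂.Adj u v) :
    A₁ = A₂ ∨ ∃ l : ℕ, l ≤ m ∧ IsPathSubgraph G l (A₁ ⊓ A₂) :=
  apartments_sharing_edge_general G m hG A₁ A₂ h₁ h₂ hshare
end

section
/- Let L be a thick generalized m-gon with m ∈ {3, 4, 5}. Then for every apartment A of L and each of the two types (bipartition classes), there exists a vertex of L that is opposite to every vertex of A of that type. -/
open SimpleGraph

variable {V : Type*}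

/-!
Since the girth is `2m`, geodesics of length `< m` are unique: a neighbour of `y` is one step
farther from `x` than `y`, unless it is the neighbour of `y` on the geodesic towards `x`. In
particular an apartment `a 0, …, a (2m - 1)` is isometric. Starting from a third neighbour `q`
of `a 1`, one walks away from the even-indexed vertices `a (2j)`, at each step avoiding the
neighbours that lead back towards them. For `m = 4, 5` the walk first follows the geodesic from
`q` towards the vertex opposite `a 1`; this keeps the number of neighbours to avoid at two,
except in the last step for `m = 5`, where there may be three.

In that case the current vertex has valency three. Opposite vertices have the same valency, and
two vertices of the same type have a common opposite, so all vertices have valency three and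
the pentagon is finite. Under collinearity its points then form a `6`-regular graph in which any
two points have exactly one common neighbour. Modulo `5` its adjacency matrix `A` satisfies
`A² = J`, so `trace (A⁵) = trace J` is the number of points, which is `1` modulo `5`; but
`trace (A⁵) = (trace A)⁵ = 0`.
-/

namespace SimpleGraph

variable {W : Type*} {G : SimpleGraph W} {u v : W}

theorem Walk.IsPath.eq_of_length_add_length_lt_egirth {p q : G.Walk u v} (hp : p.IsPath)
    (hq : q.IsPath) (h : ((p.length + q.length : ℕ) : ℕ∞) < G.egirth) : p = q := by
  classical
  -- the edges of `p` and `q` span a forest, in which paths are unique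
  let H := fromEdgeSet {e | e ∈ p.edges ∨ e ∈ q.edges}
  have hHG : H ≤ G := fun a b hab => by
    rcases hab.1 with he | he
    exacts [p.adj_of_mem_edges he, q.adj_of_mem_edges he]
  have hpH : ∀ e ∈ p.edges, e ∈ H.edgeSet := fun e he => by
    rw [edgeSet_fromEdgeSet]
    exact ⟨Or.inl he, G.not_isDiag_of_mem_edgeSet (p.edges_subset_edgeSet he)⟩
  have hqH : ∀ e ∈ q.edges, e ∈ H.edgeSet := fun e he => by
    rw [edgeSet_fromEdgeSet]
    exact ⟨Or.inr he, G.not_isDiag_of_mem_edgeSet (q.edges_subset_edgeSet he)⟩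
  have hH : H.IsAcyclic := by
    intro x c hc
    have hsub : c.edges ⊆ p.edges ++ q.edges := fun e he => by
      have := c.edges_subset_edgeSet he
      rw [edgeSet_fromEdgeSet] at this
      simpa using this.1
    have hlen : c.length ≤ p.length + q.length := by
      simpa using (hc.edges_nodup.subperm hsub).length_le
    have hgirth :=
      (hc.transfer fun e he => edgeSet_mono hHG (c.edges_subset_edgeSet he)).egirth_le_length
    rw [Walk.length_transfer] at hgirth
    exact absurd (hgirth.trans_lt ((Nat.cast_le.mpr hlen).trans_lt h)) (lt_irrefl _)
  have hpq := congrArg (fun r : H.Path u v =>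
      r.1.transfer G fun e he => edgeSet_mono hHG (r.1.edges_subset_edgeSet he))
    ((hH.subsingleton_path u v).elim ⟨p.transfer H hpH, hp.transfer hpH⟩
      ⟨q.transfer H hqH, hq.transfer hqH⟩)
  simpa [Walk.transfer_self] using hpq

theorem Walk.IsPath.length_eq_dist_of_lt_egirth {p : G.Walk u v} (hp : p.IsPath)
    (h : ((p.length + G.dist u v : ℕ) : ℕ∞) < G.egirth) : p.length = G.dist u v := by
  obtain ⟨q, hq, hql⟩ := p.reachable.exists_path_of_dist
  rw [hp.eq_of_length_add_length_lt_egirth hq (by rwa [hql]), hql]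

theorem Walk.IsCycle.dist_getVert {w : G.Walk v v} (hw : w.IsCycle) (hg : G.egirth = w.length)
    {i j : ℕ} (hij : i ≤ j) (hj : j ≤ w.length) :
    G.dist (w.getVert i) (w.getVert j) = min (j - i) (w.length - (j - i)) := by
  have hshort : G.dist (w.getVert i) (w.getVert j) ≤ j - i := by
    have := dist_le ((w.drop i).take (j - i))
    rwa [Walk.take_length, Walk.drop_length, Walk.drop_getVert, Nat.add_sub_cancel' hij,
      min_eq_left (by omega)] at this
  have hlong : G.dist (w.getVert i) (w.getVert j) ≤ w.length - (j - i) := by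
    have := dist_le ((w.drop j).append (w.take i))
    rw [Walk.length_append, Walk.take_length, Walk.drop_length, min_eq_left (by omega)] at this
    rw [dist_comm]
    omega
  refine le_antisymm (le_min hshort hlong) (not_lt.mp fun hlt => ?_)
  obtain ⟨a, b, p, hp, hplen, rfl, rfl⟩ : ∃ (a b : W) (p : G.Walk a b), p.IsPath ∧
      p.length = j - i ∧ a = w.getVert i ∧ b = w.getVert j := by
    rcases Nat.eq_zero_or_pos i with rfl | hi
    · refine ⟨_, _, w.take j, hw.isPath_take (by omega), ?_, w.getVert_zero.symm, rfl⟩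
      rw [Walk.take_length, min_eq_left hj, Nat.sub_zero]
    · refine ⟨_, _, (w.drop i).take (j - i), (hw.isPath_drop hi).take _, ?_, rfl, ?_⟩
      · rw [Walk.take_length, Walk.drop_length, min_eq_left (by omega)]
      · rw [Walk.drop_getVert, Nat.add_sub_cancel' hij]
  have := hp.length_eq_dist_of_lt_egirth (by rw [hg]; norm_cast; omega)
  omega

theorem Connected.exists_adj_dist_eq (hconn : G.Connected) {x y : W} {k : ℕ}
    (h : G.dist x y = k + 1) : ∃ z, G.Adj y z ∧ G.dist x z = k := by
  obtain ⟨p, hp⟩ := hconn.exists_walk_length_eq_dist y x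
  cases p with
  | nil => simp at h
  | @cons _ z _ hyz q =>
    have hq : q.length = k := by rw [dist_comm] at hp; simp at hp; omega
    have hle : G.dist x y ≤ G.dist x z + G.dist z y := hconn.dist_triangle
    rw [dist_eq_one_iff_adj.mpr hyz.symm] at hle
    refine ⟨z, hyz, le_antisymm ?_ (by omega)⟩
    rw [dist_comm, ← hq]
    exact dist_le q

theorem Connected.finite_of_forall_dist_le (hconn : G.Connected)
    (hfin : ∀ v, (G.neighborSet v).Finite) {n : ℕ} (hdiam : ∀ u v, G.dist u v ≤ n) :
    Finite W := by
  obtain ⟨v₀⟩ := hconn.nonempty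
  have hball : ∀ k, {v | G.dist v₀ v ≤ k}.Finite := by
    intro k
    induction k with
    | zero =>
      exact (Set.finite_singleton v₀).subset fun v hv =>
        (hconn.dist_eq_zero_iff.mp (Nat.le_zero.mp hv)).symm
    | succ k ih =>
      refine (ih.union (ih.biUnion fun w _ => hfin w)).subset fun v hv => ?_
      rcases Nat.lt_or_ge (G.dist v₀ v) (k + 1) with h | h
      · exact Or.inl (Nat.lt_succ_iff.mp h)
      · obtain ⟨w, hvw, hw⟩ := hconn.exists_adj_dist_eq (le_antisymm hv h)
        exact Or.inr (Set.mem_biUnion (le_of_eq hw) hvw.symm)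
  exact Set.finite_univ_iff.mp ((hball n).subset fun v _ => hdiam v₀ v)

theorem false_of_existsUnique_adj_adj_of_degree_eq_one [Fintype W] [DecidableEq W]
    [Nonempty W] (H : SimpleGraph W) [DecidableRel H.Adj] (p : ℕ) [Fact p.Prime]
    (hdeg : ∀ v, (H.degree v : ZMod p) = 1)
    (huniq : ∀ v w, v ≠ w → ∃! u, H.Adj v u ∧ H.Adj u w) : False := by
  -- over `ZMod p`, `A * A = J` and `A * J = J` give `A ^ p = J` and `J * J = J`, so
  -- `0 = (trace A) ^ p = trace (A ^ p) = #W = 1`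
  set A := H.adjMatrix (ZMod p)
  set J : Matrix W W (ZMod p) := Matrix.of fun _ _ => 1
  have hAJ : A * J = J := by
    ext v w
    simp [A, J, hdeg]
  have hAA : A * A = J := by
    ext v w
    rcases eq_or_ne v w with rfl | hvw
    · rw [adjMatrix_mul_self_apply_self, hdeg]
      rfl
    · obtain ⟨u, hu, hu'⟩ := huniq v w hvw
      rw [adjMatrix_mul_apply, Finset.sum_eq_single u]
      · simp [A, J, hu.2]
      · intro x hx hxu
        simp only [A, adjMatrix_apply, ite_eq_right_iff, one_ne_zero, imp_false]
        exact fun hxw => hxu (hu' x ⟨(mem_neighborFinset _ _ _).mp hx, hxw⟩)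
      · simp [hu.1]
  have hpow : ∀ k, A ^ (k + 2) = J := by
    intro k
    induction k with
    | zero => rw [sq, hAA]
    | succ k ih => rw [pow_succ', ih, hAJ]
  have hcard : (Fintype.card W : ZMod p) = 1 := by
    obtain ⟨v⟩ := ‹Nonempty W›
    have hJJ : J * J = J := by rw [← hAA, mul_assoc, hAA, hAJ, hAJ]
    simpa [J, Matrix.mul_apply] using congrFun (congrFun hJJ v) v
  obtain ⟨k, rfl⟩ : ∃ k, p = k + 2 :=
    ⟨p - 2, by have := (Fact.out : p.Prime).two_le; omega⟩
  have htrace := ZMod.trace_pow_card A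
  rw [hpow, trace_adjMatrix, zero_pow (by omega)] at htrace
  simp [Matrix.trace, J, hcard] at htrace

end SimpleGraph

section Thick

variable {G : SimpleGraph V}

theorem Thick.exists_adj_ne (ht : Thick G) (v x y : V) :
    ∃ z, G.Adj v z ∧ z ≠ x ∧ z ≠ y := by
  obtain ⟨a, b, c, ha, hb, hc, hab, hac, hbc⟩ := ht v
  by_contra! h
  rcases eq_or_ne a x with rfl | hax
  · exact hbc ((h b hb (Ne.symm hab)).trans (h c hc (Ne.symm hac)).symm)
  rcases eq_or_ne b x with rfl | hbx
  · exact hac ((h a ha hax).trans (h c hc (Ne.symm hbc)).symm)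
  · exact hab ((h a ha hax).trans (h b hb hbx).symm)

theorem thick_iff_forall_three_le_encard : Thick G ↔ ∀ v, 3 ≤ (G.neighborSet v).encard := by
  refine ⟨fun ht v => ?_, fun h v => ?_⟩
  · obtain ⟨a, b, c, ha, hb, hc, hab, hac, hbc⟩ := ht v
    calc (3 : ℕ∞) = ({a, b, c} : Set V).encard := by
          rw [Set.encard_insert_of_notMem (by simp [hab, hac]), Set.encard_pair hbc]; rfl
      _ ≤ (G.neighborSet v).encard :=
          Set.encard_le_encard (by rintro _ (rfl | rfl | rfl) <;> assumption)
  · obtain ⟨t, hts, ht3⟩ := Set.exists_subset_encard_eq (h v)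
    obtain ⟨a, b, c, hab, hac, hbc, rfl⟩ := Set.encard_eq_three.mp ht3
    exact ⟨a, b, c, hts (by simp), hts (by simp), hts (by simp), hab, hac, hbc⟩

end Thick

namespace IsGenPolygon

variable {G : SimpleGraph V} {m k : ℕ} {u v w x y z : V}

theorem connected (hG : IsGenPolygon G m) : G.Connected := hG.1

theorem dist_le (hG : IsGenPolygon G m) (u v : V) : G.dist u v ≤ m := hG.2.2.1 u v

theorem egirth_eq (hG : IsGenPolygon G m) : G.egirth = (2 * m : ℕ∞) := hG.2.2.2.2

theorem two_le (hG : IsGenPolygon G m) : 2 ≤ m := by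
  have := G.three_le_egirth
  rw [hG.egirth_eq] at this
  norm_cast at this
  omega

theorem even_dist_add_dist_add_dist (hG : IsGenPolygon G m) (u v w : V) :
    Even (G.dist u v + G.dist v w + G.dist u w) := by
  obtain ⟨hconn, ⟨c, hc⟩, -⟩ := hG
  have key : ∀ a b, Even (G.dist a b) ↔ (c a ↔ c b) := fun a b => by
    obtain ⟨p, hp⟩ := hconn.exists_walk_length_eq_dist a b
    rw [← hp]
    exact (Coloring.mk c fun h => hc h).even_length_iff_congr p
  rw [Nat.even_add, Nat.even_add, key, key, key]
  cases c u <;> cases c v <;> cases c w <;> simp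

theorem even_dist_iff (hG : IsGenPolygon G m) (hux : Even (G.dist u x)) (y : V) :
    Even (G.dist x y) ↔ Even (G.dist u y) := by
  obtain ⟨r, hr⟩ := hG.even_dist_add_dist_add_dist u x y
  obtain ⟨s, hs⟩ := hux
  constructor
  · rintro ⟨t, ht⟩
    exact ⟨G.dist u y / 2, by omega⟩
  · rintro ⟨t, ht⟩
    exact ⟨G.dist x y / 2, by omega⟩

theorem dist_eq_or_eq_of_adj (hG : IsGenPolygon G m) (hyz : G.Adj y z) (x : V) :
    G.dist x z = G.dist x y + 1 ∨ G.dist x y = G.dist x z + 1 := by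
  obtain ⟨r, hr⟩ := hG.even_dist_add_dist_add_dist x y z
  rw [dist_eq_one_iff_adj.mpr hyz] at hr
  rcases hyz.diff_dist_adj (u := x) with h | h | h <;> omega

theorem eq_of_dist_eq (hG : IsGenPolygon G m) (hxy : G.dist x y < m)
    (hu : G.dist x u + G.dist u y = G.dist x y) (hv : G.dist x v + G.dist v y = G.dist x y)
    (huv : G.dist x u = G.dist x v) : u = v := by
  obtain ⟨p₁, hp₁⟩ := hG.connected.exists_walk_length_eq_dist x u
  obtain ⟨p₂, hp₂⟩ := hG.connected.exists_walk_length_eq_dist u y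
  obtain ⟨q₁, hq₁⟩ := hG.connected.exists_walk_length_eq_dist x v
  obtain ⟨q₂, hq₂⟩ := hG.connected.exists_walk_length_eq_dist v y
  have hp : (p₁.append p₂).IsPath := Walk.isPath_of_length_eq_dist _ (by simp; omega)
  have hq : (q₁.append q₂).IsPath := Walk.isPath_of_length_eq_dist _ (by simp; omega)
  have hpq := hp.eq_of_length_add_length_lt_egirth hq (by
    rw [hG.egirth_eq]; simp only [Walk.length_append]; norm_cast; omega)
  simpa [Walk.getVert_append, hp₁, hq₁, huv] using congrArg (·.getVert (G.dist x v)) hpq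

theorem dist_eq_add_one_of_adj (hG : IsGenPolygon G m) (hxy : G.dist x y = k) (hk : k < m)
    (hyw : G.Adj y w) (hxw : G.dist x w + 1 = k) (hyz : G.Adj y z) (hzw : z ≠ w) :
    G.dist x z = k + 1 := by
  rcases hG.dist_eq_or_eq_of_adj hyz x with h | h
  · omega
  · refine absurd (hG.eq_of_dist_eq (x := x) (y := y) (by omega) ?_ ?_ (by omega)) hzw
    · rw [dist_eq_one_iff_adj.mpr hyz.symm]; omega
    · rw [dist_eq_one_iff_adj.mpr hyw.symm]; omega

theorem dist_add_one_eq_of_adj (hG : IsGenPolygon G m) (hxy : G.dist x y = m)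
    (hyz : G.Adj y z) : G.dist x z + 1 = m := by
  have := hG.dist_le x z
  rcases hG.dist_eq_or_eq_of_adj hyz x with h | h <;> omega

theorem exists_forall_adj_ne_dist_eq (hG : IsGenPolygon G m) (hxy : G.dist x y < m) :
    ∃ w, ∀ z, G.Adj y z → z ≠ w → G.dist x z = G.dist x y + 1 := by
  rcases Nat.eq_zero_or_pos (G.dist x y) with h | h
  · obtain rfl := hG.connected.dist_eq_zero_iff.mp h
    exact ⟨x, fun z hz _ => by simp [hz]⟩
  · obtain ⟨w, hyw, hxw⟩ :=
      hG.connected.exists_adj_dist_eq (x := x) (y := y) (k := G.dist x y - 1) (by omega)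
    exact ⟨w, fun z hz hzw => hG.dist_eq_add_one_of_adj rfl hxy hyw (by omega) hz hzw⟩

theorem encard_neighborSet_le_of_dist_eq (hG : IsGenPolygon G m) (hxy : G.dist x y = m) :
    (G.neighborSet y).encard ≤ (G.neighborSet x).encard := by
  -- send a neighbour `L` of `y` to the first step of a geodesic from `x` to `L`; two neighbours
  -- with the same image would give two geodesics of length `m - 1` from it to `y`
  have hm := hG.two_le
  have hproj : ∀ L, ∃ S, G.Adj y L → G.Adj x S ∧ G.dist S L + 2 = m := by
    intro L
    by_cases hyL : G.Adj y L
    · have hxL := hG.dist_add_one_eq_of_adj hxy hyL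
      obtain ⟨S, hxS, hLS⟩ := hG.connected.exists_adj_dist_eq (x := L) (y := x) (k := m - 2)
        (by rw [dist_comm]; omega)
      exact ⟨S, fun _ => ⟨hxS, by rw [dist_comm]; omega⟩⟩
    · exact ⟨x, fun h => absurd h hyL⟩
  choose f hf using hproj
  refine Set.encard_le_encard_of_injOn (fun L hL => (hf L hL).1) fun L hL L' hL' hf' => ?_
  have hSy : G.dist (f L) y + 1 = m := by
    rw [dist_comm]
    exact hG.dist_add_one_eq_of_adj (by rwa [dist_comm]) (hf L hL).1
  have hL1 : G.dist L y = 1 := by rw [dist_comm]; exact dist_eq_one_iff_adj.mpr hL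
  have hL'1 : G.dist L' y = 1 := by rw [dist_comm]; exact dist_eq_one_iff_adj.mpr hL'
  have h₁ := (hf L hL).2
  have h₂ := (hf L' hL').2
  rw [← hf'] at h₂
  exact hG.eq_of_dist_eq (x := f L) (y := y) (by omega) (by omega) (by omega) (by omega)

theorem exists_dist_eq_dist_eq (hG : IsGenPolygon G m) (ht : Thick G)
    (huv : Even (G.dist u v)) : ∃ w, G.dist u w = m ∧ G.dist v w = m := by
  -- walk `m` steps away from `u`, avoiding at each step the neighbour leading back towards `v`;
  -- the distance to `v` grows until it reaches `m - 1`, and parity decides the last step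
  have key : ∀ i ≤ m, ∃ x,
      G.dist u x = i ∧ min (G.dist u v + i) (m - 1) ≤ G.dist v x := by
    intro i hi
    induction i with
    | zero => exact ⟨u, by simp, by rw [dist_comm]; omega⟩
    | succ i ih =>
      obtain ⟨x, hux, hvx⟩ := ih (by omega)
      obtain ⟨w₁, hw₁⟩ := hG.exists_forall_adj_ne_dist_eq (x := u) (y := x) (by omega)
      obtain ⟨w₂, hw₂⟩ : ∃ w₂, ∀ z, G.Adj x z → z ≠ w₂ →
          G.dist v z = G.dist v x + 1 ∨ G.dist v x = m := by
        by_cases h : G.dist v x < m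
        · obtain ⟨w₂, hw₂⟩ := hG.exists_forall_adj_ne_dist_eq h
          exact ⟨w₂, fun z hz hne => Or.inl (hw₂ z hz hne)⟩
        · exact ⟨x, fun _ _ _ => Or.inr (le_antisymm (hG.dist_le v x) (not_lt.mp h))⟩
      obtain ⟨y, hxy, hy₁, hy₂⟩ := ht.exists_adj_ne x w₁ w₂
      refine ⟨y, by rw [hw₁ y hxy hy₁, hux], ?_⟩
      rcases hw₂ y hxy hy₂ with h | h
      · omega
      · have := hG.dist_add_one_eq_of_adj h hxy
        omega
  obtain ⟨w, huw, hvw⟩ := key m le_rfl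
  obtain ⟨r, hr⟩ := hG.even_dist_add_dist_add_dist u v w
  obtain ⟨s, hs⟩ := huv
  have := hG.dist_le v w
  exact ⟨w, huw, by omega⟩

theorem encard_neighborSet_le (hG : IsGenPolygon G m) (ht : Thick G) (hm : Odd m) (u v : V) :
    (G.neighborSet u).encard ≤ (G.neighborSet v).encard := by
  have viaOpposite : ∀ {a b}, Even (G.dist a b) →
      (G.neighborSet a).encard ≤ (G.neighborSet b).encard := fun {a b} hab => by
    obtain ⟨w, haw, hbw⟩ := hG.exists_dist_eq_dist_eq ht hab
    exact (hG.encard_neighborSet_le_of_dist_eq (x := w) (by rwa [dist_comm])).trans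
      (hG.encard_neighborSet_le_of_dist_eq hbw)
  by_cases huv : Even (G.dist u v)
  · exact viaOpposite huv
  · obtain ⟨w, hvw, -⟩ := hG.exists_dist_eq_dist_eq ht (u := v) (v := v) (by simp)
    obtain ⟨r, hr⟩ := hG.even_dist_add_dist_add_dist u v w
    obtain ⟨s, hs⟩ := Nat.not_even_iff_odd.mp huv
    obtain ⟨t, ht⟩ := hm
    exact (viaOpposite ⟨G.dist u w / 2, by omega⟩).trans
      (hG.encard_neighborSet_le_of_dist_eq hvw)

end IsGenPolygon

/-- `a` runs periodically around a cycle of length `2 * m` all of whose arcs of length at most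
`m` are geodesics: the parametrisation of an apartment used below. -/
def IsClosedGeodesic (G : SimpleGraph V) (m : ℕ) (a : ℕ → V) : Prop :=
  Function.Periodic a (2 * m) ∧ ∀ i k, k ≤ m → G.dist (a i) (a (i + k)) = k

namespace IsClosedGeodesic

variable {G : SimpleGraph V} {m : ℕ} {a : ℕ → V}

theorem dist_eq (ha : IsClosedGeodesic G m a) {i j k : ℕ} (hk : k ≤ m)
    (h : i + k ≡ j [MOD 2 * m] ∨ j + k ≡ i [MOD 2 * m]) : G.dist (a i) (a j) = k := by
  wlog hij : i + k ≡ j [MOD 2 * m] generalizing i j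
  · rw [dist_comm]
    exact this h.symm (h.resolve_left hij)
  rw [← ha.1.map_mod_nat j, ← (hij : (i + k) % (2 * m) = j % (2 * m)), ha.1.map_mod_nat]
  exact ha.2 i k hk

theorem adj (ha : IsClosedGeodesic G m a) (hm : 1 ≤ m) (i : ℕ) : G.Adj (a i) (a (i + 1)) :=
  dist_eq_one_iff_adj.mp (ha.2 i 1 hm)

theorem shift (ha : IsClosedGeodesic G m a) (s : ℕ) :
    IsClosedGeodesic G m (fun i => a (s + i)) :=
  ⟨fun i => by simp only [← add_assoc]; exact ha.1 _,
    fun i k hk => by simpa only [add_assoc] using ha.2 (s + i) k hk⟩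

theorem color_eq_iff_even (ha : IsClosedGeodesic G m a) (hm : 1 ≤ m) {c : V → Bool}
    (hc : ∀ ⦃v w : V⦄, G.Adj v w → c v ≠ c w) (i : ℕ) :
    c (a i) = c (a 0) ↔ Even i := by
  induction i with
  | zero => simp
  | succ i ih =>
    have hne := hc (ha.adj hm i)
    rw [Nat.even_add_one, ← ih]
    revert hne
    cases c (a i) <;> cases c (a (i + 1)) <;> cases c (a 0) <;> decide

end IsClosedGeodesic

theorem IsApartment.exists_isClosedGeodesic {G : SimpleGraph V} {m : ℕ} {A : G.Subgraph}
    (hA : IsApartment G m A) (hg : G.egirth = (2 * m : ℕ∞)) :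
    ∃ a, IsClosedGeodesic G m a ∧ ∀ x ∈ A.verts, ∃ i, a i = x := by
  obtain ⟨v, w, hw, hlen, rfl⟩ := hA
  have hm : 0 < m := by
    have := hw.three_le_length
    omega
  have hdist := fun {i j : ℕ} => hw.dist_getVert (i := i) (j := j) (by rw [hg, hlen]; rfl)
  rw [hlen] at hdist
  refine ⟨fun i => w.getVert (i % (2 * m)), ⟨fun i => by simp, fun i k hk => ?_⟩,
    fun x hx => ?_⟩
  · have hi := Nat.mod_lt i (show 0 < 2 * m by omega)
    simp only
    rw [Nat.add_mod, Nat.mod_eq_of_lt (show k < 2 * m by omega)]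
    rcases lt_or_ge (i % (2 * m) + k) (2 * m) with h | h
    · rw [Nat.mod_eq_of_lt h, hdist (by omega) (by omega)]
      omega
    · rw [Nat.mod_eq_sub_mod h, Nat.mod_eq_of_lt (show i % (2 * m) + k - 2 * m < 2 * m by omega),
        dist_comm, hdist (by omega) (by omega)]
      omega
  · rw [Walk.mem_verts_toSubgraph, Walk.mem_support_iff_exists_getVert] at hx
    obtain ⟨i, rfl, hi⟩ := hx
    rcases hi.lt_or_eq with hi | rfl
    · exact ⟨i, by simp only [Nat.mod_eq_of_lt (hlen ▸ hi)]⟩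
    · exact ⟨0, by simp [Walk.getVert_length]⟩

namespace IsGenPolygon

variable {G : SimpleGraph V} {m : ℕ} {x y : V}

theorem card_filter_dist_eq_two [Fintype V] [DecidableEq V] [DecidableRel G.Adj]
    (hG : IsGenPolygon G m) (hm : 3 ≤ m) (x : V) :
    (Finset.univ.filter fun y => G.dist x y = 2).card =
      ∑ L ∈ G.neighborFinset x, (G.degree L - 1) := by
  have hdist : ∀ {L y}, G.Adj x L → G.Adj L y → y ≠ x → G.dist x y = 2 :=
    fun hxL hLy hyx => hG.dist_eq_add_one_of_adj (dist_eq_one_iff_adj.mpr hxL) (by omega)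
      hxL.symm (by simp) hLy hyx
  have hset : (Finset.univ.filter fun y => G.dist x y = 2) =
      (G.neighborFinset x).biUnion fun L => (G.neighborFinset L).erase x := by
    ext y
    simp only [Finset.mem_filter, Finset.mem_univ, true_and, Finset.mem_biUnion,
      mem_neighborFinset, Finset.mem_erase]
    constructor
    · intro h
      obtain ⟨L, hyL, hxL⟩ := hG.connected.exists_adj_dist_eq (k := 1) h
      refine ⟨L, dist_eq_one_iff_adj.mp hxL, ?_, hyL.symm⟩
      rintro rfl
      simp at h
    · rintro ⟨L, hxL, hyx, hLy⟩
      exact hdist hxL hLy hyx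
  rw [hset, Finset.card_biUnion]
  · refine Finset.sum_congr rfl fun L hL => ?_
    rw [mem_neighborFinset] at hL
    rw [Finset.card_erase_of_mem ((mem_neighborFinset _ _ _).mpr hL.symm),
      card_neighborFinset_eq_degree]
  · intro L hL L' hL' hne
    simp only [Function.onFun, Finset.disjoint_left, Finset.mem_erase, mem_neighborFinset,
      Finset.mem_coe] at hL hL' ⊢
    rintro y ⟨hyx, hLy⟩ ⟨-, hL'y⟩
    have hxy := hdist hL hLy hyx
    refine hne (hG.eq_of_dist_eq (x := x) (y := y) (by omega) ?_ ?_ ?_) <;>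
      simp only [dist_eq_one_iff_adj.mpr hL, dist_eq_one_iff_adj.mpr hL',
        dist_eq_one_iff_adj.mpr hLy, dist_eq_one_iff_adj.mpr hL'y, hxy]

theorem existsUnique_dist_two_of_dist_eq_two (hG : IsGenPolygon G m) (hm : 3 < m)
    (h3 : ∀ v, (G.neighborSet v).encard = 3) (hxy : x ≠ y) (hd : G.dist x y = 2) :
    ∃! w, G.dist x w = 2 ∧ G.dist w y = 2 := by
  obtain ⟨K, hyK, hxK⟩ := hG.connected.exists_adj_dist_eq (k := 1) hd
  have hKx : G.Adj K x := (dist_eq_one_iff_adj.mp hxK).symm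
  obtain ⟨t, hKt, htx, hty⟩ :=
    (thick_iff_forall_three_le_encard.mpr fun v => (h3 v).ge).exists_adj_ne K x y
  refine ⟨t, ⟨hG.dist_eq_add_one_of_adj hxK (by omega) hKx (by simp) hKt htx, ?_⟩, ?_⟩
  · rw [dist_comm]
    exact hG.dist_eq_add_one_of_adj (dist_eq_one_iff_adj.mpr hyK) (by omega) hyK.symm (by simp)
      hKt hty
  rintro z ⟨hxz, hzy⟩
  obtain ⟨K₁, hzK₁, hxK₁⟩ := hG.connected.exists_adj_dist_eq (k := 1) hxz
  have hyx : G.dist y x = 2 := by rwa [dist_comm]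
  have hyz : G.dist y z = 2 := by rwa [dist_comm]
  have hzK₁' : G.dist z K₁ = 1 := dist_eq_one_iff_adj.mpr hzK₁
  -- `K₁` is adjacent to `y`, since otherwise `x` and `z` would both be the middle vertex of the
  -- geodesic from `y` to `K₁`
  have hyK₁ : G.dist K₁ y = 1 := by
    rcases hG.dist_eq_or_eq_of_adj hzK₁ y with h | h
    · refine absurd (hG.eq_of_dist_eq (x := y) (y := K₁) (u := x) (v := z) (by omega)
        (by omega) (by omega) (by omega)) fun hxz' => ?_
      subst hxz'
      simp at hxz
    · rw [dist_comm]
      omega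
  have hK₁ : K₁ = K := hG.eq_of_dist_eq (x := x) (y := y) (by omega) (by omega)
    (by rw [dist_eq_one_iff_adj.mpr hyK.symm]; omega) (by omega)
  subst hK₁
  by_contra hzt
  have hzx : z ≠ x := by rintro rfl; simp at hxz
  have hzy' : z ≠ y := by rintro rfl; simp at hzy
  have h4 : ({z, x, y, t} : Set V).encard = 4 := by
    rw [Set.encard_insert_of_notMem (by simp [hzx, hzy', hzt]),
      Set.encard_insert_of_notMem (by simp [hxy, htx.symm]), Set.encard_pair hty.symm]
    rfl
  have hle := Set.encard_le_encard (s := {z, x, y, t}) (t := G.neighborSet K₁)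
    (by rintro _ (rfl | rfl | rfl | rfl); exacts [hzK₁.symm, hKx, hyK.symm, hKt])
  rw [h4, h3] at hle
  exact absurd hle (by decide)

theorem existsUnique_dist_two_of_dist_eq_four (hG : IsGenPolygon G m) (hm : 4 < m)
    (hd : G.dist x y = 4) : ∃! w, G.dist x w = 2 ∧ G.dist w y = 2 := by
  obtain ⟨K, hyK, hxK⟩ := hG.connected.exists_adj_dist_eq (k := 3) hd
  obtain ⟨w, hKw, hxw⟩ := hG.connected.exists_adj_dist_eq (k := 2) hxK
  have hwy : G.dist w y = 2 := by
    have h₁ : G.dist w y ≤ G.dist w K + G.dist K y := hG.connected.dist_triangle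
    have h₂ : G.dist x y ≤ G.dist x w + G.dist w y := hG.connected.dist_triangle
    rw [dist_eq_one_iff_adj.mpr hKw.symm, dist_eq_one_iff_adj.mpr hyK.symm] at h₁
    omega
  exact ⟨w, ⟨hxw, hwy⟩, fun z ⟨hxz, hzy⟩ =>
    hG.eq_of_dist_eq (x := x) (y := y) (by omega) (by omega) (by omega) (by omega)⟩

end IsGenPolygon

/-- The vertices of the type of `u₀`, adjacent when at distance two: the collinearity graph
of the points when `u₀` is a point. -/
def SimpleGraph.collinearityGraph (G : SimpleGraph V) (u₀ : V) :
    SimpleGraph {x : V // Even (G.dist u₀ x)} where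
  Adj x y := G.dist x y = 2
  symm := ⟨fun x y (h : G.dist x.1 y.1 = 2) => by rwa [dist_comm]⟩
  loopless := ⟨fun x (h : G.dist x.1 x.1 = 2) => by simp at h⟩

theorem IsGenPolygon.not_forall_encard_neighborSet_eq_three {G : SimpleGraph V}
    (hG : IsGenPolygon G 5) : ¬ ∀ v, (G.neighborSet v).encard = 3 := by
  intro h3
  classical
  have : Finite V :=
    hG.connected.finite_of_forall_dist_le (fun v => Set.finite_of_encard_eq_coe (h3 v)) hG.dist_le
  let := Fintype.ofFinite V
  have hdeg : ∀ v, G.degree v = 3 := fun v => by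
    have := h3 v
    rwa [← coe_neighborFinset, Set.encard_coe_eq_coe_finsetCard, card_neighborFinset_eq_degree,
      show (3 : ℕ∞) = (3 : ℕ) from rfl, Nat.cast_inj] at this
  obtain ⟨u₀⟩ := hG.connected.nonempty
  have hpoint : ∀ {x y : V}, Even (G.dist u₀ x) → G.dist x y = 2 → Even (G.dist u₀ y) :=
    fun hx hxy => (hG.even_dist_iff hx _).mp (by rw [hxy]; decide)
  have : Nonempty {x : V // Even (G.dist u₀ x)} := ⟨⟨u₀, by simp⟩⟩
  have : Fact (Nat.Prime 5) := ⟨by norm_num⟩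
  refine false_of_existsUnique_adj_adj_of_degree_eq_one (G.collinearityGraph u₀) 5
    (fun x => ?_) fun x y hxy => ?_
  · have : (G.collinearityGraph u₀).degree x = 6 := by
      rw [← card_neighborSet_eq_degree]
      calc Fintype.card ((G.collinearityGraph u₀).neighborSet x)
          _ = Fintype.card {y : V // G.dist x y = 2} :=
            Fintype.card_congr (Equiv.subtypeSubtypeEquivSubtype fun h => hpoint x.2 h)
          _ = (Finset.univ.filter fun y => G.dist x y = 2).card := Fintype.card_subtype _
          _ = 6 := by simp [hG.card_filter_dist_eq_two (by norm_num), hdeg]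
    rw [this]
    rfl
  · have hxy' : x.1 ≠ y.1 := Subtype.coe_injective.ne hxy
    obtain ⟨w, ⟨hxw, hwy⟩, hw⟩ : ∃! w, G.dist x w = 2 ∧ G.dist w y = 2 := by
      have := hG.dist_le x y
      have := hG.connected.pos_dist_of_ne hxy'
      obtain ⟨r, hr⟩ := (hG.even_dist_iff x.2 y).mpr y.2
      obtain h | h : G.dist x y = 2 ∨ G.dist x y = 4 := by omega
      · exact hG.existsUnique_dist_two_of_dist_eq_two (by norm_num) h3 hxy' h
      · exact hG.existsUnique_dist_two_of_dist_eq_four (by norm_num) h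
    exact ⟨⟨w, hpoint x.2 hxw⟩, ⟨hxw, hwy⟩, fun z hz => Subtype.ext (hw z hz)⟩

namespace IsGenPolygon

variable {G : SimpleGraph V} {m : ℕ} {a : ℕ → V}

theorem exists_adj_forall_dist_eq_add_one (hG : IsGenPolygon G m) (ht : Thick G) {f : ℕ → V}
    {n k : ℕ} {x w₁ w₂ : V} (hk : k < m) (hw₁ : G.Adj x w₁) (hw₂ : G.Adj x w₂)
    (hf : ∀ j < n, G.dist (f j) x = k ∧
      (G.dist (f j) w₁ + 1 = k ∨ G.dist (f j) w₂ + 1 = k)) :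
    ∃ y, G.Adj x y ∧ ∀ j < n, G.dist (f j) y = k + 1 := by
  obtain ⟨y, hxy, hy₁, hy₂⟩ := ht.exists_adj_ne x w₁ w₂
  refine ⟨y, hxy, fun j hj => ?_⟩
  obtain ⟨hd, h₁ | h₂⟩ := hf j hj
  · exact hG.dist_eq_add_one_of_adj hd hk hw₁ h₁ hxy hy₁
  · exact hG.dist_eq_add_one_of_adj hd hk hw₂ h₂ hxy hy₂

theorem exists_opposite_three (hG : IsGenPolygon G 3) (ht : Thick G)
    (ha : IsClosedGeodesic G 3 a) : ∃ M, ∀ j < 3, G.dist (a (2 * j)) M = 3 := by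
  have h10 : G.Adj (a 1) (a 0) := (ha.adj (by norm_num) 0).symm
  have h12 : G.Adj (a 1) (a 2) := ha.adj (by norm_num) 1
  have d01 : G.dist (a 0) (a 1) = 1 := ha.dist_eq (by norm_num) (by decide)
  have d21 : G.dist (a 2) (a 1) = 1 := ha.dist_eq (by norm_num) (by decide)
  have d41 : G.dist (a 4) (a 1) = 3 := ha.dist_eq (by norm_num) (by decide)
  obtain ⟨q, hq, hq₀, hq₂⟩ := ht.exists_adj_ne (a 1) (a 0) (a 2)
  have dq₀ : G.dist (a 0) q = 2 :=
    hG.dist_eq_add_one_of_adj d01 (by norm_num) h10 (by simp) hq hq₀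
  have dq₂ : G.dist (a 2) q = 2 :=
    hG.dist_eq_add_one_of_adj d21 (by norm_num) h12 (by simp) hq hq₂
  have dq₄ : G.dist (a 4) q + 1 = 3 := hG.dist_add_one_eq_of_adj d41 hq
  obtain ⟨Y, hqY, dY₄⟩ :=
    hG.connected.exists_adj_dist_eq (k := 1) (x := a 4) (y := q) (by omega)
  obtain ⟨M, -, hM⟩ := hG.exists_adj_forall_dist_eq_add_one ht (f := fun j => a (2 * j))
    (n := 3) (k := 2) (by norm_num) hq.symm hqY fun j hj => by
      interval_cases j <;> simp only [Nat.reduceMul] <;> omega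
  exact ⟨M, hM⟩

theorem exists_near_opposite_four (hG : IsGenPolygon G 4) (ht : Thick G)
    (ha : IsClosedGeodesic G 4 a) :
    ∃ N q s, G.Adj N q ∧ G.Adj N s ∧ ∀ j < 4, G.dist (a (2 * j)) N = 3 ∧
      (G.dist (a (2 * j)) q + 1 = 3 ∨ G.dist (a (2 * j)) s + 1 = 3) := by
  have h10 : G.Adj (a 1) (a 0) := (ha.adj (by norm_num) 0).symm
  have h12 : G.Adj (a 1) (a 2) := ha.adj (by norm_num) 1
  have h54 : G.Adj (a 5) (a 4) := (ha.adj (by norm_num) 4).symm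
  have h56 : G.Adj (a 5) (a 6) := ha.adj (by norm_num) 5
  have d01 : G.dist (a 0) (a 1) = 1 := ha.dist_eq (by norm_num) (by decide)
  have d21 : G.dist (a 2) (a 1) = 1 := ha.dist_eq (by norm_num) (by decide)
  have d41 : G.dist (a 4) (a 1) = 3 := ha.dist_eq (by norm_num) (by decide)
  have d42 : G.dist (a 4) (a 2) = 2 := ha.dist_eq (by norm_num) (by decide)
  have d45 : G.dist (a 4) (a 5) = 1 := ha.dist_eq (by norm_num) (by decide)
  have d51 : G.dist (a 5) (a 1) = 4 := ha.dist_eq (by norm_num) (by decide)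
  have d61 : G.dist (a 6) (a 1) = 3 := ha.dist_eq (by norm_num) (by decide)
  have d60 : G.dist (a 6) (a 0) = 2 := ha.dist_eq (by norm_num) (by decide)
  have d65 : G.dist (a 6) (a 5) = 1 := ha.dist_eq (by norm_num) (by decide)
  obtain ⟨q, hq, hq₀, hq₂⟩ := ht.exists_adj_ne (a 1) (a 0) (a 2)
  have dq₀ : G.dist (a 0) q = 2 :=
    hG.dist_eq_add_one_of_adj d01 (by norm_num) h10 (by simp) hq hq₀
  have dq₂ : G.dist (a 2) q = 2 :=
    hG.dist_eq_add_one_of_adj d21 (by norm_num) h12 (by simp) hq hq₂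
  have dq₄ : G.dist (a 4) q = 4 :=
    hG.dist_eq_add_one_of_adj d41 (by norm_num) h12 (by omega) hq hq₂
  have dq₆ : G.dist (a 6) q = 4 :=
    hG.dist_eq_add_one_of_adj d61 (by norm_num) h10 (by omega) hq hq₀
  have dq₅ : G.dist (a 5) q + 1 = 4 := hG.dist_add_one_eq_of_adj d51 hq
  obtain ⟨N, hqN, dN₅⟩ :=
    hG.connected.exists_adj_dist_eq (k := 2) (x := a 5) (y := q) (by omega)
  obtain ⟨s, hNs, ds₅⟩ :=
    hG.connected.exists_adj_dist_eq (k := 1) (x := a 5) (y := N) dN₅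
  have hs₅ : G.Adj (a 5) s := dist_eq_one_iff_adj.mp ds₅
  have hNa₁ : N ≠ a 1 := by rintro rfl; omega
  have hNa₅ : N ≠ a 5 := by rintro rfl; simp at dN₅
  -- `s` is neither `a 4` nor `a 6`, since these are opposite `q`
  have hsa : ∀ i, G.dist (a i) q = 4 → s ≠ a i := by
    rintro i hi rfl
    have := dist_eq_one_iff_adj.mpr hNs.symm
    rcases hG.dist_eq_or_eq_of_adj hqN.symm (a i) with h | h <;> omega
  have ds₄ : G.dist (a 4) s = 2 :=
    hG.dist_eq_add_one_of_adj d45 (by norm_num) h54 (by simp) hs₅ (hsa 4 dq₄)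
  have ds₆ : G.dist (a 6) s = 2 :=
    hG.dist_eq_add_one_of_adj d65 (by norm_num) h56 (by simp) hs₅ (hsa 6 dq₆)
  have dN₀ : G.dist (a 0) N = 3 :=
    hG.dist_eq_add_one_of_adj dq₀ (by norm_num) hq.symm (by omega) hqN hNa₁
  have dN₂ : G.dist (a 2) N = 3 :=
    hG.dist_eq_add_one_of_adj dq₂ (by norm_num) hq.symm (by omega) hqN hNa₁
  have dN₄ : G.dist (a 4) N = 3 :=
    hG.dist_eq_add_one_of_adj ds₄ (by norm_num) hs₅.symm (by omega) hNs.symm hNa₅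
  have dN₆ : G.dist (a 6) N = 3 :=
    hG.dist_eq_add_one_of_adj ds₆ (by norm_num) hs₅.symm (by omega) hNs.symm hNa₅
  refine ⟨N, q, s, hqN.symm, hNs, fun j hj => ?_⟩
  interval_cases j <;> simp only [Nat.reduceMul] <;> omega

theorem exists_opposite_four (hG : IsGenPolygon G 4) (ht : Thick G)
    (ha : IsClosedGeodesic G 4 a) : ∃ M, ∀ j < 4, G.dist (a (2 * j)) M = 4 := by
  obtain ⟨N, q, s, hNq, hNs, hN⟩ := hG.exists_near_opposite_four ht ha
  obtain ⟨M, -, hM⟩ := hG.exists_adj_forall_dist_eq_add_one ht (by norm_num) hNq hNs hN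
  exact ⟨M, hM⟩

theorem exists_near_opposite_five (hG : IsGenPolygon G 5) (ht : Thick G)
    (ha : IsClosedGeodesic G 5 a) :
    ∃ z N, G.Adj z N ∧ (∀ j < 5, G.dist (a (2 * j)) z = 4) ∧
      G.dist (a 0) N = 3 ∧ G.dist (a 2) N = 3 ∧ G.dist (a 6) N = 3 := by
  have h10 : G.Adj (a 1) (a 0) := (ha.adj (by norm_num) 0).symm
  have h12 : G.Adj (a 1) (a 2) := ha.adj (by norm_num) 1
  have d01 : G.dist (a 0) (a 1) = 1 := ha.dist_eq (by norm_num) (by decide)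
  have d21 : G.dist (a 2) (a 1) = 1 := ha.dist_eq (by norm_num) (by decide)
  have d41 : G.dist (a 4) (a 1) = 3 := ha.dist_eq (by norm_num) (by decide)
  have d42 : G.dist (a 4) (a 2) = 2 := ha.dist_eq (by norm_num) (by decide)
  have d61 : G.dist (a 6) (a 1) = 5 := ha.dist_eq (by norm_num) (by decide)
  have d81 : G.dist (a 8) (a 1) = 3 := ha.dist_eq (by norm_num) (by decide)
  have d80 : G.dist (a 8) (a 0) = 2 := ha.dist_eq (by norm_num) (by decide)
  obtain ⟨q, hq, hq₀, hq₂⟩ := ht.exists_adj_ne (a 1) (a 0) (a 2)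
  have dq₀ : G.dist (a 0) q = 2 :=
    hG.dist_eq_add_one_of_adj d01 (by norm_num) h10 (by simp) hq hq₀
  have dq₂ : G.dist (a 2) q = 2 :=
    hG.dist_eq_add_one_of_adj d21 (by norm_num) h12 (by simp) hq hq₂
  have dq₄ : G.dist (a 4) q = 4 :=
    hG.dist_eq_add_one_of_adj d41 (by norm_num) h12 (by omega) hq hq₂
  have dq₈ : G.dist (a 8) q = 4 :=
    hG.dist_eq_add_one_of_adj d81 (by norm_num) h10 (by omega) hq hq₀
  have dq₆ : G.dist (a 6) q + 1 = 5 := hG.dist_add_one_eq_of_adj d61 hq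
  obtain ⟨N, hqN, dN₆⟩ :=
    hG.connected.exists_adj_dist_eq (k := 3) (x := a 6) (y := q) (by omega)
  obtain ⟨x, hNx, dx₆⟩ :=
    hG.connected.exists_adj_dist_eq (k := 2) (x := a 6) (y := N) dN₆
  have hNa₁ : N ≠ a 1 := by rintro rfl; omega
  have dN₀ : G.dist (a 0) N = 3 :=
    hG.dist_eq_add_one_of_adj dq₀ (by norm_num) hq.symm (by omega) hqN hNa₁
  have dN₂ : G.dist (a 2) N = 3 :=
    hG.dist_eq_add_one_of_adj dq₂ (by norm_num) hq.symm (by omega) hqN hNa₁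
  have dN₄ : G.dist (a 4) N = 5 :=
    hG.dist_eq_add_one_of_adj dq₄ (by norm_num) hq.symm (by omega) hqN hNa₁
  have dN₈ : G.dist (a 8) N = 5 :=
    hG.dist_eq_add_one_of_adj dq₈ (by norm_num) hq.symm (by omega) hqN hNa₁
  obtain ⟨z, hNz, hzq, hzx⟩ := ht.exists_adj_ne N q x
  have dz₀ : G.dist (a 0) z = 4 :=
    hG.dist_eq_add_one_of_adj dN₀ (by norm_num) hqN.symm (by omega) hNz hzq
  have dz₂ : G.dist (a 2) z = 4 :=
    hG.dist_eq_add_one_of_adj dN₂ (by norm_num) hqN.symm (by omega) hNz hzq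
  have dz₆ : G.dist (a 6) z = 4 :=
    hG.dist_eq_add_one_of_adj dN₆ (by norm_num) hNx (by omega) hNz hzx
  have dz₄ : G.dist (a 4) z + 1 = 5 := hG.dist_add_one_eq_of_adj dN₄ hNz
  have dz₈ : G.dist (a 8) z + 1 = 5 := hG.dist_add_one_eq_of_adj dN₈ hNz
  refine ⟨z, N, hNz.symm, fun j hj => ?_, dN₀, dN₂, dN₆⟩
  interval_cases j <;> simp only [Nat.reduceMul] <;> omega

theorem exists_opposite_five (hG : IsGenPolygon G 5) (ht : Thick G)
    (ha : IsClosedGeodesic G 5 a) : ∃ M, ∀ j < 5, G.dist (a (2 * j)) M = 5 := by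
  obtain ⟨z, N, hzN, hz, dN₀, dN₂, dN₆⟩ := hG.exists_near_opposite_five ht ha
  obtain ⟨Y, hzY, dY₄⟩ :=
    hG.connected.exists_adj_dist_eq (k := 3) (x := a 4) (y := z) (hz 2 (by norm_num))
  obtain ⟨Y', hzY', dY'₈⟩ :=
    hG.connected.exists_adj_dist_eq (k := 3) (x := a 8) (y := z) (hz 4 (by norm_num))
  by_cases hS : ∃ S, G.Adj z S ∧ S ≠ N ∧ S ≠ Y ∧ S ≠ Y'
  · obtain ⟨S, hzS, hSN, hSY, hSY'⟩ := hS
    refine ⟨S, fun j hj => ?_⟩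
    have hzj := hz j hj
    interval_cases j <;> simp only [Nat.reduceMul] at hzj ⊢
    · exact hG.dist_eq_add_one_of_adj hzj (by norm_num) hzN (by omega) hzS hSN
    · exact hG.dist_eq_add_one_of_adj hzj (by norm_num) hzN (by omega) hzS hSN
    · exact hG.dist_eq_add_one_of_adj hzj (by norm_num) hzY (by omega) hzS hSY
    · exact hG.dist_eq_add_one_of_adj hzj (by norm_num) hzN (by omega) hzS hSN
    · exact hG.dist_eq_add_one_of_adj hzj (by norm_num) hzY' (by omega) hzS hSY'
  -- otherwise `z` has valency three, which forces a generalized pentagon of order (2, 2)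
  push Not at hS
  classical
  exfalso
  have hz : (G.neighborSet z).encard ≤ 3 := by
    have := Set.encard_coe_eq_coe_finsetCard ({N, Y, Y'} : Finset V)
    simp only [Finset.coe_insert, Finset.coe_singleton] at this
    calc (G.neighborSet z).encard ≤ ({N, Y, Y'} : Set V).encard :=
          Set.encard_le_encard fun S hzS => by
            by_cases hSN : S = N
            · simp [hSN]
            by_cases hSY : S = Y
            · simp [hSY]
            · simp [hS S hzS hSN hSY]
      _ ≤ 3 := by rw [this]; exact_mod_cast Finset.card_le_three
  exact hG.not_forall_encard_neighborSet_eq_three fun v =>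
    le_antisymm ((hG.encard_neighborSet_le ht (by decide) v z).trans hz)
      (thick_iff_forall_three_le_encard.mp ht v)

theorem exists_opposite (hG : IsGenPolygon G m) (hm : m = 3 ∨ m = 4 ∨ m = 5) (ht : Thick G)
    (ha : IsClosedGeodesic G m a) : ∃ M, ∀ j, G.dist (a (2 * j)) M = m := by
  obtain ⟨M, hM⟩ : ∃ M, ∀ j < m, G.dist (a (2 * j)) M = m := by
    rcases hm with rfl | rfl | rfl
    exacts [hG.exists_opposite_three ht ha, hG.exists_opposite_four ht ha,
      hG.exists_opposite_five ht ha]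
  refine ⟨M, fun j => ?_⟩
  rw [← ha.1.map_mod_nat, Nat.mul_mod_mul_left]
  exact hM _ (Nat.mod_lt _ (by omega))

end IsGenPolygon

/-- In a thick generalized `m`-gon with `m ∈ {3, 4, 5}`, for any apartment `A` and
each of the two types there is a vertex opposite to all vertices of `A` of that
type. -/
theorem exists_vertex_opposite_apartment
    (G : SimpleGraph V) (m : ℕ) (hm : m = 3 ∨ m = 4 ∨ m = 5)
    (hG : IsGenPolygon G m) (hthick : Thick G)
    (c : V → Bool) (hc : ∀ ⦃v w : V⦄, G.Adj v w → c v ≠ c w)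
    (A : G.Subgraph) (hA : IsApartment G m A) :
    ∀ b : Bool, ∃ v : V, ∀ x ∈ A.verts, c x = b → G.dist v x = m := by
  obtain ⟨a, ha, hAa⟩ := hA.exists_isClosedGeodesic hG.egirth_eq
  have hcol := ha.color_eq_iff_even (by omega) hc
  intro b
  obtain ⟨s, hs⟩ : ∃ s, ∀ i, c (a i) = b → ∃ j, i = s + 2 * j := by
    by_cases hb : c (a 0) = b
    · refine ⟨0, fun i hi => ?_⟩
      obtain ⟨j, rfl⟩ := (hcol i).mp (hi.trans hb.symm)
      exact ⟨j, by omega⟩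
    · refine ⟨1, fun i hi => ?_⟩
      obtain ⟨j, rfl⟩ := Nat.not_even_iff_odd.mp fun he => hb (hi ▸ ((hcol i).mpr he).symm)
      exact ⟨j, by omega⟩
  obtain ⟨M, hM⟩ := hG.exists_opposite hm hthick (ha.shift s)
  refine ⟨M, fun x hx hxb => ?_⟩
  obtain ⟨i, rfl⟩ := hAa x hx
  obtain ⟨j, rfl⟩ := hs i hxb
  rw [dist_comm]
  exact hM j
end

section
/- Let m ≥ 2 and let L be a thick generalized m-gon. Then for any two vertices v₁ and v₂ of L of the same type (not necessarily distinct), there exists a vertex v of L that is opposite to both v₁ and v₂. -/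
/-!
Since `v₁` and `v₂` have the same type, `d(v₁, v₂)` is even, so the midpoint of a geodesic
between them is equidistant from both, at distance at most `m`. Now push outwards: if `z` is
at distance `t < m` from both, then since there is no cycle shorter than `2m`, `z` has at most
one neighbour closer to `v₁` and at most one closer to `v₂`, while by bipartiteness every other
neighbour is one step farther from both. Thickness supplies such a neighbour, and we repeat
until `t = m`.
-/

open SimpleGraph

variable {V : Type*}

namespace SimpleGraph

variable {G : SimpleGraph V} {u v x y z : V}

theorem Coloring.even_dist_iff_congr (c : G.Coloring Bool) (h : G.Reachable u v) :
    Even (G.dist u v) ↔ (c u ↔ c v) := by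
  obtain ⟨p, hp⟩ := h.exists_walk_length_eq_dist
  rw [← hp, c.even_length_iff_congr]

theorem Adj.dist_eq_add_one_or_add_one_eq (c : G.Coloring Bool) (hr : G.Reachable u z)
    (h : G.Adj z y) : G.dist u y = G.dist u z + 1 ∨ G.dist u y + 1 = G.dist u z := by
  have hne : G.dist u y ≠ G.dist u z := fun heq => by
    have hy := c.even_dist_iff_congr (hr.trans h.reachable)
    have hz := c.even_dist_iff_congr hr
    rw [heq] at hy
    have hzy := c.valid h
    revert hy hz hzy
    cases c u <;> cases c z <;> cases c y <;> simp
  rcases h.diff_dist_adj (u := u) with h | h | h <;> omega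

theorem Reachable.exists_dist_eq_and_dist_eq_sub (h : G.Reachable u v) {k : ℕ}
    (hk : k ≤ G.dist u v) : ∃ x, G.dist u x = k ∧ G.dist x v = G.dist u v - k := by
  obtain ⟨p, hp⟩ := h.exists_walk_length_eq_dist
  have hux : G.dist u (p.getVert k) ≤ k := (dist_le (p.take k)).trans (by simp)
  have hxv : G.dist (p.getVert k) v ≤ G.dist u v - k := (dist_le (p.drop k)).trans (by simp [hp])
  have := (p.take k).reachable.dist_triangle_left v
  exact ⟨p.getVert k, by omega, by omega⟩

theorem Walk.dist_le_length_of_mem_support (p : G.Walk u v) (hx : x ∈ p.support) :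
    G.dist u x ≤ p.length := by
  classical
  exact (dist_le (p.takeUntil x hx)).trans (p.length_takeUntil_le_length hx)

def closerNeighborSet (G : SimpleGraph V) (u z : V) : Set V :=
  {y | G.Adj z y ∧ G.dist u y + 1 = G.dist u z}

theorem exists_isPath_concat_of_mem_closerNeighborSet (hy : y ∈ G.closerNeighborSet u z) :
    ∃ p : G.Walk u y, (p.concat hy.1.symm).IsPath ∧ p.length + 1 = G.dist u z := by
  obtain ⟨hadj, hdist⟩ := hy
  have hr : G.Reachable u y :=
    (Reachable.of_dist_ne_zero (v := z) (by omega)).trans hadj.reachable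
  obtain ⟨p, hp, hlen⟩ := hr.exists_path_of_dist
  refine ⟨p, hp.concat (fun hz => ?_) _, by omega⟩
  have := p.dist_le_length_of_mem_support hz
  omega

theorem closerNeighborSet_subsingleton (h : 2 * (G.dist u z : ℕ∞) < G.egirth) :
    (G.closerNeighborSet u z).Subsingleton := by
  intro a ha b hb
  by_contra hab
  obtain ⟨p, hp, hpl⟩ := exists_isPath_concat_of_mem_closerNeighborSet ha
  obtain ⟨q, hq, hql⟩ := exists_isPath_concat_of_mem_closerNeighborSet hb
  have hne : p.concat ha.1.symm ≠ q.concat hb.1.symm := fun he => hab (Walk.concat_inj he).1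
  obtain ⟨w, -, -, c, hc, hcl⟩ := hp.exists_isCycle_length_le_add_of_ne hq hne
  have hcl' : c.length ≤ 2 * G.dist u z := by simp only [Walk.length_concat] at hcl; omega
  exact (egirth_le_length hc).not_gt (lt_of_le_of_lt (by exact_mod_cast hcl') h)

theorem Thick.exists_adj_notMem_union {s t : Set V} (hG : Thick G) (z : V)
    (hs : s.Subsingleton) (ht : t.Subsingleton) : ∃ y, G.Adj z y ∧ y ∉ s ∧ y ∉ t := by
  obtain ⟨a, b, d, ha, hb, hd, hab, had, hbd⟩ := hG z
  by_contra! h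
  have := h a ha; have := h b hb; have := h d hd
  by_cases a ∈ s <;> by_cases b ∈ s <;> by_cases d ∈ s <;> grind [Set.Subsingleton]

variable {v₁ v₂ : V} {t s : ℕ}

theorem Thick.exists_dist_eq_add_one (hG : Thick G) (hconn : G.Connected) (c : G.Coloring Bool)
    (h₁ : G.dist v₁ z = t) (h₂ : G.dist v₂ z = t) (ht : 2 * (t : ℕ∞) < G.egirth) :
    ∃ y, G.dist v₁ y = t + 1 ∧ G.dist v₂ y = t + 1 := by
  obtain ⟨y, hzy, hy₁, hy₂⟩ := hG.exists_adj_notMem_union z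
    (closerNeighborSet_subsingleton (h₁ ▸ ht)) (closerNeighborSet_subsingleton (h₂ ▸ ht))
  have := hzy.dist_eq_add_one_or_add_one_eq c (hconn v₁ z)
  have := hzy.dist_eq_add_one_or_add_one_eq c (hconn v₂ z)
  simp only [closerNeighborSet, Set.mem_ofPred_eq, hzy, true_and] at hy₁ hy₂
  exact ⟨y, by omega, by omega⟩

theorem Thick.exists_dist_eq_of_le (hG : Thick G) (hconn : G.Connected) (c : G.Coloring Bool)
    (h₁ : G.dist v₁ z = t) (h₂ : G.dist v₂ z = t) (hts : t ≤ s)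
    (hs : 2 * (s : ℕ∞) ≤ G.egirth) : ∃ y, G.dist v₁ y = s ∧ G.dist v₂ y = s := by
  induction s, hts using Nat.le_induction with
  | base => exact ⟨z, h₁, h₂⟩
  | succ s hts ih =>
    have hs' : 2 * (s : ℕ∞) < G.egirth := lt_of_lt_of_le (by norm_cast; omega) hs
    obtain ⟨y, hy₁, hy₂⟩ := ih hs'.le
    exact hG.exists_dist_eq_add_one hconn c hy₁ hy₂ hs'

end SimpleGraph

theorem exists_common_opposite_general
    (G : SimpleGraph V) (m : ℕ)
    (hG : IsGenPolygon G m) (hthick : Thick G)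
    (c : V → Bool) (hc : ∀ ⦃v w : V⦄, G.Adj v w → c v ≠ c w)
    (v₁ v₂ : V) (hsame : c v₁ = c v₂) :
    ∃ v : V, G.dist v v₁ = m ∧ G.dist v v₂ = m := by
  obtain ⟨hconn, -, hdiam, -, hgirth⟩ := hG
  let col : G.Coloring Bool := Coloring.mk c fun h => hc h
  obtain ⟨j, hj⟩ : Even (G.dist v₁ v₂) :=
    (col.even_dist_iff_congr (hconn v₁ v₂)).mpr (Bool.eq_iff_iff.mp hsame)
  obtain ⟨x, hx₁, hx₂⟩ := (hconn v₁ v₂).exists_dist_eq_and_dist_eq_sub (k := j) (by omega)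
  obtain ⟨v, hv₁, hv₂⟩ := hthick.exists_dist_eq_of_le hconn col hx₁
    (by rw [SimpleGraph.dist_comm, hx₂]; omega) (by have := hdiam v₁ v₂; omega) hgirth.ge
  exact ⟨v, SimpleGraph.dist_comm.trans hv₁, SimpleGraph.dist_comm.trans hv₂⟩

/-- In a thick generalized `m`-gon, any two vertices of the same type have a common
opposite vertex. -/
theorem exists_common_opposite
    (G : SimpleGraph V) (m : ℕ) (hm : 2 ≤ m)
    (hG : IsGenPolygon G m) (hthick : Thick G)
    (c : V → Bool) (hc : ∀ ⦃v w : V⦄, G.Adj v w → c v ≠ c w)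
    (v₁ v₂ : V) (hsame : c v₁ = c v₂) :
    ∃ v : V, G.dist v v₁ = m ∧ G.dist v v₂ = m :=
  exists_common_opposite_general G m hG hthick c hc v₁ v₂ hsame
end

section
/- Let m ≥ 2 and let L be a thick generalized m-gon. Then any two edges of L are contained in a common apartment; that is, for any edges e and e' of L there is a cycle of length 2m in L containing both e and e'. -/
open SimpleGraph

variable {V : Type*}

/-!
Two edges always lie on a common path of length at most `m + 1`: join the closest pair of their
endpoints by a geodesic and append the two edges; minimality keeps the other two endpoints off
the geodesic, and bipartiteness puts them one step further apart, within the diameter `m`. By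
thickness such a path extends, edge by edge, to a path of length `m + 1`, and the girth `2m`
keeps it a path. A path `p` of length `m + 1` then closes up to an apartment: a geodesic `g`
between its ends differs from `p`, so `2m ≤ |p| + |g|` by the girth, while `|g| ≤ m` and
`|g| ≡ m + 1 (mod 2)` force `|g| = m - 1`; and two distinct paths whose total length equals the
girth form a cycle.
-/

namespace SimpleGraph

variable {G : SimpleGraph V} {m : ℕ} {x y a b w : V}

theorem Walk.dist_add_dist_le_length (p : G.Walk x y) (hw : w ∈ p.support) :
    G.dist x w + G.dist w y ≤ p.length := by
  classical
  rw [← p.take_spec hw, Walk.length_append]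
  exact add_le_add (dist_le _) (dist_le _)

theorem Coloring.even_length_iff_even_length (c : G.Coloring Bool) (p q : G.Walk x y) :
    Even p.length ↔ Even q.length := by
  rw [c.even_length_iff_congr p, c.even_length_iff_congr q]

theorem Coloring.dist_ne_of_adj (c : G.Coloring Bool) (hr : G.Reachable x a) (hab : G.Adj a b) :
    G.dist x a ≠ G.dist x b := by
  obtain ⟨p, hp⟩ := hr.exists_walk_length_eq_dist
  obtain ⟨q, hq⟩ := (hr.trans hab.reachable).exists_walk_length_eq_dist
  have hpar := c.even_length_iff_even_length (p.concat hab) q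
  rw [Walk.length_concat, hp, hq] at hpar
  intro h
  rw [h, Nat.even_add_one] at hpar
  tauto

theorem Walk.IsPath.egirth_le_length_add_length {p q : G.Walk x y} (hp : p.IsPath)
    (hq : q.IsPath) (hne : p ≠ q) : G.egirth ≤ p.length + q.length := by
  obtain ⟨_, -, -, c, hc, hlen⟩ := hp.exists_isCycle_length_le_add_of_ne hq hne
  exact (egirth_le_length hc).trans (by exact_mod_cast hlen)

theorem Walk.IsPath.isCycle_append_reverse_of_le_egirth {p q : G.Walk x y} (hp : p.IsPath)
    (hq : q.IsPath) (hne : p ≠ q) (hlen : (p.length + q.length : ℕ∞) ≤ G.egirth) :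
    (p.append q.reverse).IsCycle := by
  obtain ⟨w, -, -, c, hc, hsub⟩ := hp.exists_isCycle_sublist_of_ne hq hne
  have hcl : p.length + q.length ≤ c.length := by
    exact_mod_cast hlen.trans (egirth_le_length hc)
  -- the support of `c` is a sublist of that of `p.append q.reverse` and at least as long
  have hsupp : c.support = (p.append q.reverse).support := by
    rw [Walk.support_append, Walk.support_reverse]
    refine hsub.eq_of_length_le ?_
    simp only [List.length_append, List.length_tail, List.length_reverse, Walk.length_support]
    omega
  obtain rfl : w = x := by
    rw [← c.cons_tail_support, ← (p.append q.reverse).cons_tail_support] at hsupp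
    exact (List.cons.inj hsupp).1
  rwa [← Walk.ext_support hsupp]

theorem Walk.IsPath.concat_of_lt_egirth {p : G.Walk x y} (hp : p.IsPath) (h : G.Adj y w)
    (he : s(y, w) ∉ p.edges) (hlen : (p.length + 1 : ℕ∞) < G.egirth) : (p.concat h).IsPath := by
  classical
  refine hp.concat (fun hw => hlen.not_ge ?_) h
  have hc : (Walk.cons h (p.dropUntil w hw)).IsCycle :=
    (Walk.cons_isCycle_iff _ h).mpr
      ⟨hp.dropUntil hw, fun he' => he (p.edges_dropUntil_subset_edges hw he')⟩
  refine (egirth_le_length hc).trans ?_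
  have := p.length_dropUntil_le_length hw
  simp only [Walk.length_cons]
  exact_mod_cast (by omega : (p.dropUntil w hw).length + 1 ≤ p.length + 1)

theorem Walk.IsPath.exists_adj_notMem_edges {p : G.Walk x y} (hp : p.IsPath) (ha : G.Adj y a)
    (hb : G.Adj y b) (hab : a ≠ b) : ∃ z, G.Adj y z ∧ s(y, z) ∉ p.edges := by
  by_contra! h
  have hnil : ¬ p.Nil := Walk.edges_eq_nil.not.mp (List.ne_nil_of_mem (h a ha))
  have hmem : ∀ z, G.Adj y z → z ∈ p.toSubgraph.neighborSet y := fun z hz => by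
    rw [Subgraph.mem_neighborSet, ← Subgraph.mem_edgeSet, Walk.mem_edges_toSubgraph]
    exact h z hz
  have ha' := hmem a ha
  have hb' := hmem b hb
  rw [hp.neighborSet_toSubgraph_endpoint hnil] at ha' hb'
  exact hab (ha'.trans hb'.symm)

theorem Walk.IsPath.exists_extension_of_lt_egirth
    (hdeg : ∀ v, ∃ a b, G.Adj v a ∧ G.Adj v b ∧ a ≠ b) {p : G.Walk x y} (hp : p.IsPath)
    {n : ℕ} (hn : p.length ≤ n) (hlen : (n : ℕ∞) < G.egirth) :
    ∃ (z : V) (q : G.Walk x z), q.IsPath ∧ q.length = n ∧ p.edges ⊆ q.edges := by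
  induction n, hn using Nat.le_induction with
  | base => exact ⟨y, p, hp, rfl, List.Subset.refl _⟩
  | succ n _ ih =>
    obtain ⟨z, q, hq, hql, hpq⟩ := ih (lt_of_le_of_lt (by norm_cast; omega) hlen)
    obtain ⟨a, b, ha, hb, hab⟩ := hdeg z
    obtain ⟨w, hw, hwq⟩ := hq.exists_adj_notMem_edges ha hb hab
    refine ⟨w, q.concat hw, hq.concat_of_lt_egirth hw hwq (by rw [hql]; exact_mod_cast hlen),
      by rw [Walk.length_concat, hql], ?_⟩
    rw [Walk.edges_concat, List.concat_eq_append]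
    exact List.Subset.trans hpq (List.subset_append_left _ _)

theorem Walk.IsPath.exists_isCycle_of_length_eq_succ (hconn : G.Connected) (c : G.Coloring Bool)
    (hdiam : ∀ a b, G.dist a b ≤ m) (hgirth : 2 * (m : ℕ∞) ≤ G.egirth) {p : G.Walk x y}
    (hp : p.IsPath) (hlen : p.length = m + 1) :
    ∃ w : G.Walk x x, w.IsCycle ∧ w.length = 2 * m ∧ p.edges ⊆ w.edges := by
  obtain ⟨g, hg, hgl⟩ := hconn.exists_path_of_dist x y
  have hpg : p ≠ g := fun h => by have := hdiam x y; rw [← h] at hgl; omega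
  have hsum : 2 * m ≤ p.length + g.length := by
    exact_mod_cast hgirth.trans (hp.egirth_le_length_add_length hg hpg)
  have hpar : Even (m + 1) ↔ Even g.length := hlen ▸ c.even_length_iff_even_length p g
  have hgm : g.length ≠ m := fun h => by rw [h, Nat.even_add_one] at hpar; tauto
  have hgl' : g.length = m - 1 := by have := hdiam x y; omega
  refine ⟨p.append g.reverse, hp.isCycle_append_reverse_of_le_egirth hg hpg ?_, ?_, ?_⟩
  · refine le_trans ?_ hgirth
    exact_mod_cast (by omega : p.length + g.length ≤ 2 * m)
  · rw [Walk.length_append, Walk.length_reverse]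
    omega
  · rw [Walk.edges_append]
    exact List.subset_append_left _ _

theorem Walk.IsPath.exists_isCycle_of_length_le (hconn : G.Connected) (c : G.Coloring Bool)
    (hdiam : ∀ a b, G.dist a b ≤ m) (hgirth : 2 * (m : ℕ∞) ≤ G.egirth) (hm : 2 ≤ m)
    (hdeg : ∀ v, ∃ a b, G.Adj v a ∧ G.Adj v b ∧ a ≠ b) {p : G.Walk x y}
    (hp : p.IsPath) (hlen : p.length ≤ m + 1) :
    ∃ w : G.Walk x x, w.IsCycle ∧ w.length = 2 * m ∧ p.edges ⊆ w.edges := by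
  obtain ⟨z, q, hq, hql, hpq⟩ := hp.exists_extension_of_lt_egirth hdeg hlen <|
    lt_of_lt_of_le (by exact_mod_cast (by omega : m + 1 < 2 * m)) hgirth
  obtain ⟨w, hw, hwl, hqw⟩ := hq.exists_isCycle_of_length_eq_succ hconn c hdiam hgirth hql
  exact ⟨w, hw, hwl, List.Subset.trans hpq hqw⟩

theorem exists_isPath_mem_edges_of_dist_le (hconn : G.Connected) (c : G.Coloring Bool)
    {u v u' v' : V} (h : G.Adj u v) (h' : G.Adj u' v') (hu : G.dist v u' ≤ G.dist u u')
    (hv' : G.dist v u' ≤ G.dist v v') :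
    ∃ (x y : V) (p : G.Walk x y), p.IsPath ∧ p.length ≤ G.dist v v' + 1 ∧
      s(u, v) ∈ p.edges ∧ s(u', v') ∈ p.edges := by
  have hvu' : G.dist v u' ≠ G.dist v v' := c.dist_ne_of_adj (hconn v u') h'
  have hvu : G.dist v u = 1 := dist_eq_one_iff_adj.mpr h.symm
  have hv'u' : G.dist v' u' = 1 := dist_eq_one_iff_adj.mpr h'.symm
  by_cases huv' : u = v'
  · subst huv'
    obtain rfl : v = u' := hconn.dist_eq_zero_iff.mp (by omega)
    exact ⟨u, v, h.toWalk, by simp [h.ne], by simp, by simp, by simp [Sym2.eq_swap]⟩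
  obtain ⟨g, hg, hgl⟩ := hconn.exists_path_of_dist v u'
  have hv'g : v' ∉ g.support := fun hw => by
    have := g.dist_add_dist_le_length hw
    omega
  have hug : u ∉ (g.concat h').support := by
    rw [Walk.support_concat, List.mem_append, List.mem_singleton, not_or]
    refine ⟨fun hw => ?_, huv'⟩
    have := g.dist_add_dist_le_length hw
    omega
  refine ⟨u, v', Walk.cons h (g.concat h'), (hg.concat hv'g h').cons hug, ?_, by simp, ?_⟩
  · rw [Walk.length_cons, Walk.length_concat]
    omega
  · simp [Walk.edges_concat]

theorem exists_isPath_mem_edges (hconn : G.Connected) (c : G.Coloring Bool)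
    (hdiam : ∀ a b, G.dist a b ≤ m) {u v u' v' : V} (h : G.Adj u v) (h' : G.Adj u' v') :
    ∃ (x y : V) (p : G.Walk x y), p.IsPath ∧ p.length ≤ m + 1 ∧
      s(u, v) ∈ p.edges ∧ s(u', v') ∈ p.edges := by
  wlog hv : min (G.dist v u') (G.dist v v') ≤ min (G.dist u u') (G.dist u v') generalizing u v
  · obtain ⟨x, y, p, hp, hlen, he, he'⟩ := this h.symm (by omega)
    exact ⟨x, y, p, hp, hlen, Sym2.eq_swap ▸ he, he'⟩
  wlog hu' : G.dist v u' ≤ G.dist v v' generalizing u' v'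
  · obtain ⟨x, y, p, hp, hlen, he, he'⟩ := this h'.symm (by omega) (by omega)
    exact ⟨x, y, p, hp, hlen, he, Sym2.eq_swap ▸ he'⟩
  obtain ⟨x, y, p, hp, hlen, he, he'⟩ :=
    exists_isPath_mem_edges_of_dist_le hconn c h h' (by omega) hu'
  exact ⟨x, y, p, hp, hlen.trans (by have := hdiam v v'; omega), he, he'⟩

end SimpleGraph

/-- In a thick generalized `m`-gon, any two edges are contained in a common
apartment, i.e. a cycle of length `2 * m`. -/
theorem edges_in_common_apartment
    (G : SimpleGraph V) (m : ℕ) (hm : 2 ≤ m)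
    (hG : IsGenPolygon G m) (hthick : Thick G)
    (u v u' v' : V) (h : G.Adj u v) (h' : G.Adj u' v') :
    ∃ A : G.Subgraph, IsApartment G m A ∧ A.Adj u v ∧ A.Adj u' v' := by
  obtain ⟨hconn, ⟨col, hcol⟩, hdiam, -, hgirth⟩ := hG
  have c : G.Coloring Bool := Coloring.mk col fun hvw => hcol hvw
  have hdeg : ∀ v, ∃ a b, G.Adj v a ∧ G.Adj v b ∧ a ≠ b := fun v => by
    obtain ⟨a, b, -, ha, hb, -, hab, -⟩ := hthick v
    exact ⟨a, b, ha, hb, hab⟩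
  obtain ⟨x, y, p, hp, hlen, he, he'⟩ := exists_isPath_mem_edges hconn c hdiam h h'
  obtain ⟨w, hw, hwl, hpw⟩ :=
    hp.exists_isCycle_of_length_le hconn c hdiam hgirth.ge hm hdeg hlen
  refine ⟨w.toSubgraph, ⟨x, w, hw, hwl, rfl⟩, ?_, ?_⟩ <;>
    rw [← Subgraph.mem_edgeSet, Walk.mem_edges_toSubgraph]
  exacts [hpw he, hpw he']
end
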